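/- arXiv:1612.09496 — 5 statements merged into one kernel-verified Lean document; each statement's English description precedes it below -/
import Mathlib

section
/- Let T > 0, let E_s, E_r : [0,T] → [0,∞) be nondecreasing harvested-energy curves, B_s : [0,T] → [0,∞) a nondecreasing arrival-data curve, and r_sr, r_rd rate functions. Let B* : [0,T] → [0,∞) be the transmitted data curve of some power policy feasible for (E_s, B_s, r_sr), and assume: (i) B* is convex; (ii) B*(T) ≥ ∫₀ᵀ r_sr(p(s)) ds for every policy p feasible for (E_s, B_s, r_sr) (B* maximizes the final transmitted data over the first hop); (iii) on every open interval on which B* is not affine, B*(t) ≥ ∫₀ᵗ r_sr(p(s)) ds for every policy p feasible for (E_s, B_s, r_sr) and every t in that interval. Then the two-hop maximum throughput satisfies D(T) = sup { ∫₀ᵀ r_rd(p(t)) dt : p is a power policy feasible for (E_r, B*, r_rd) }; i.e., the two-hop problem decomposes into a point-to-point problem at the source followed by a point-to-point problem at the relay with arrival-data curve B*. -/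
open MeasureTheory Set Filter intervalIntegral

noncomputable section

/-- A rate function: continuous, strictly increasing, concave on `[0,∞)`,
vanishing at `0` and tending to `∞`. -/
def IsRateFunction (r : ℝ → ℝ) : Prop :=
  ContinuousOn r (Set.Ici 0) ∧ StrictMonoOn r (Set.Ici 0) ∧
    ConcaveOn ℝ (Set.Ici 0) r ∧ r 0 = 0 ∧
    Filter.Tendsto r Filter.atTop Filter.atTop

/-- An integrable power policy `p` is feasible for harvested energy `E`,
arrival data `B` and rate function `r` on `[0,T]`. -/
def Feasible (T : ℝ) (E B r p : ℝ → ℝ) : Prop :=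
  IntervalIntegrable p MeasureTheory.volume 0 T ∧
  IntervalIntegrable (fun s => r (p s)) MeasureTheory.volume 0 T ∧
  (∀ t ∈ Set.Icc (0:ℝ) T, 0 ≤ p t) ∧
  (∀ t ∈ Set.Icc (0:ℝ) T, (∫ s in (0:ℝ)..t, p s) ≤ E t) ∧
  (∀ t ∈ Set.Icc (0:ℝ) T, (∫ s in (0:ℝ)..t, r (p s)) ≤ B t)

/-- Two-hop feasibility of a pair of power policies `(psr, prd)`. -/
def TwoHopFeasible (T : ℝ) (Es Er Bs rsr rrd psr prd : ℝ → ℝ) : Prop :=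
  IntervalIntegrable psr MeasureTheory.volume 0 T ∧
  IntervalIntegrable prd MeasureTheory.volume 0 T ∧
  IntervalIntegrable (fun s => rsr (psr s)) MeasureTheory.volume 0 T ∧
  IntervalIntegrable (fun s => rrd (prd s)) MeasureTheory.volume 0 T ∧
  (∀ t ∈ Set.Icc (0:ℝ) T, 0 ≤ psr t ∧ 0 ≤ prd t) ∧
  (∀ t ∈ Set.Icc (0:ℝ) T, (∫ s in (0:ℝ)..t, psr s) ≤ Es t) ∧
  (∀ t ∈ Set.Icc (0:ℝ) T, (∫ s in (0:ℝ)..t, prd s) ≤ Er t) ∧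
  (∀ t ∈ Set.Icc (0:ℝ) T, (∫ s in (0:ℝ)..t, rsr (psr s)) ≤ Bs t) ∧
  (∀ t ∈ Set.Icc (0:ℝ) T,
    (∫ s in (0:ℝ)..t, rrd (prd s)) ≤ ∫ s in (0:ℝ)..t, rsr (psr s))

/-!
If `B*` is not affine on `(0, T)`, hypothesis (iii) on the whole of `(0, T)`, together with
(ii) at `T`, makes `B*` dominate the first-hop data curve of every two-hop feasible pair, so the
relay policy of that pair is already feasible against `B*`. Conversely, pairing `p*` with a relay
policy feasible against `B*` gives a two-hop feasible pair.

If `B*` is affine, it is a line `t ↦ m t`. For a two-hop feasible pair the excess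
`G t = ∫₀ᵗ (r_rd ∘ p_rd - m)` satisfies `G T ≤ 0`. On the set `U` where `G > 0` the relay switches
to the constant power `c` with `r_rd c = m`. `U` is a countable disjoint union of excursion
intervals of `G`, each starting and ending at a zero of `G`, so
`∫_{(0,t] ∩ U} (r_rd ∘ p_rd - m) = max (G t) 0`. The new data curve is therefore
`∫₀ᵗ r_rd ∘ p_rd - max (G t) 0 ≤ m t` and ends at the same value, and by Jensen's inequality for
the concave `r_rd` the new policy never spends more energy than `p_rd`.
-/

theorem exists_last_zero_of_nonpos_of_pos {f : ℝ → ℝ} {a x : ℝ} (hax : a ≤ x)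
    (hf : ContinuousOn f (Icc a x)) (ha : f a ≤ 0) (hx : 0 < f x) :
    ∃ α ∈ Ico a x, f α = 0 ∧ ∀ s ∈ Ioc α x, 0 < f s := by
  set S := Icc a x ∩ f ⁻¹' Iic 0
  have hSa : a ∈ S := ⟨left_mem_Icc.2 hax, ha⟩
  have hSbdd : BddAbove S := ⟨x, fun s hs => hs.1.2⟩
  have hαS : sSup S ∈ S :=
    (hf.preimage_isClosed_of_isClosed isClosed_Icc isClosed_Iic).csSup_mem ⟨a, hSa⟩ hSbdd
  have hαx : sSup S < x := hαS.1.2.lt_of_ne fun h => (h ▸ hαS.2 : f x ≤ 0).not_gt hx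
  have hpos : ∀ s ∈ Ioc (sSup S) x, 0 < f s := fun s hs => by
    by_contra! hs0
    exact (le_csSup hSbdd ⟨⟨(le_csSup hSbdd hSa).trans hs.1.le, hs.2⟩, hs0⟩).not_gt hs.1
  refine ⟨sSup S, ⟨hαS.1.1, hαx⟩, le_antisymm hαS.2 ?_, hpos⟩
  by_contra! hneg
  obtain ⟨s, hs, hfs⟩ := intermediate_value_Ioo hαx.le
    (hf.mono (Icc_subset_Icc hαS.1.1 le_rfl)) ⟨hneg, hx⟩
  exact (hpos s ⟨hs.1, hs.2.le⟩).ne' hfs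

theorem exists_first_zero_of_pos_of_nonpos {f : ℝ → ℝ} {x b : ℝ} (hxb : x ≤ b)
    (hf : ContinuousOn f (Icc x b)) (hx : 0 < f x) (hb : f b ≤ 0) :
    ∃ β ∈ Ioc x b, f β = 0 ∧ ∀ s ∈ Ico x β, 0 < f s := by
  have hf' : ContinuousOn (fun s => f (-s)) (Icc (-b) (-x)) :=
    hf.comp continuousOn_neg fun s hs => ⟨le_neg.1 hs.2, neg_le.1 hs.1⟩
  obtain ⟨α, hα, hfα, hpos⟩ := exists_last_zero_of_nonpos_of_pos (neg_le_neg hxb) hf'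
    (by simpa using hb) (by simpa using hx)
  refine ⟨-α, ⟨lt_neg.1 hα.2, neg_le.1 hα.1⟩, hfα, fun s hs => ?_⟩
  simpa using hpos (-s) ⟨lt_neg.1 hs.2, neg_le_neg hs.1⟩

def excursions (f : ℝ → ℝ) (a b : ℝ) : Set (ℝ × ℝ) :=
  {I | I.1 < I.2 ∧ a ≤ I.1 ∧ I.2 ≤ b ∧ f I.1 = 0 ∧ f I.2 = 0 ∧ ∀ s ∈ Ioo I.1 I.2, 0 < f s}

theorem excursions_pairwiseDisjoint (f : ℝ → ℝ) (a b : ℝ) :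
    (excursions f a b).PairwiseDisjoint fun I => Ioo I.1 I.2 := by
  rintro I ⟨-, -, -, hI₁, hI₂, hI⟩ J ⟨-, -, -, hJ₁, hJ₂, hJ⟩ hIJ
  refine Set.disjoint_left.2 fun z ⟨hIz, hzI⟩ ⟨hJz, hzJ⟩ => hIJ (Prod.ext ?_ ?_)
  · rcases lt_trichotomy I.1 J.1 with h | h | h
    · exact absurd hJ₁ (hI _ ⟨h, hJz.trans hzI⟩).ne'
    · exact h
    · exact absurd hI₁ (hJ _ ⟨h, hIz.trans hzJ⟩).ne'
  · rcases lt_trichotomy I.2 J.2 with h | h | h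
    · exact absurd hI₂ (hJ _ ⟨hJz.trans hzI, h⟩).ne'
    · exact h
    · exact absurd hJ₂ (hI _ ⟨hIz.trans hzJ, h⟩).ne'

theorem excursions_countable (f : ℝ → ℝ) (a b : ℝ) : (excursions f a b).Countable :=
  (excursions_pairwiseDisjoint f a b).countable_of_isOpen (fun _ _ => isOpen_Ioo)
    fun _ hI => nonempty_Ioo.2 hI.1

theorem setOf_pos_eq_biUnion_excursions {f : ℝ → ℝ} {a b : ℝ}
    (hf : ContinuousOn f (Icc a b)) (ha : f a ≤ 0) (hb : f b ≤ 0) :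
    {t ∈ Ioo a b | 0 < f t} = ⋃ I ∈ excursions f a b, Ioo I.1 I.2 := by
  ext t
  simp only [mem_iUnion, exists_prop]
  constructor
  · rintro ⟨ht, hft⟩
    obtain ⟨α, hα, hfα, hαpos⟩ := exists_last_zero_of_nonpos_of_pos ht.1.le
      (hf.mono (Icc_subset_Icc le_rfl ht.2.le)) ha hft
    obtain ⟨β, hβ, hfβ, hβpos⟩ := exists_first_zero_of_pos_of_nonpos ht.2.le
      (hf.mono (Icc_subset_Icc ht.1.le le_rfl)) hft hb
    refine ⟨(α, β), ⟨hα.2.trans hβ.1, hα.1, hβ.2, hfα, hfβ, fun s hs => ?_⟩, hα.2, hβ.1⟩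
    rcases le_or_gt s t with hst | hst
    · exact hαpos s ⟨hs.1, hst⟩
    · exact hβpos s ⟨hst.le, hs.2⟩
  · rintro ⟨I, ⟨-, haI, hIb, -, -, hI⟩, ht⟩
    exact ⟨⟨haI.trans_lt ht.1, ht.2.trans_le hIb⟩, hI t ht⟩

theorem IntervalIntegrable.continuousOn_primitive_Icc {g : ℝ → ℝ} {a c : ℝ} (hac : a ≤ c)
    (hg : IntervalIntegrable g volume a c) :
    ContinuousOn (fun t => ∫ s in a..t, g s) (Icc a c) := by
  simpa [uIcc_of_le hac] using continuousOn_primitive_interval' hg left_mem_uIcc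

theorem IntervalIntegrable.mono_right_of_le {g : ℝ → ℝ} {a c x : ℝ}
    (hg : IntervalIntegrable g volume a c) (hax : a ≤ x) (hxc : x ≤ c) :
    IntervalIntegrable g volume a x :=
  hg.mono_set (uIcc_subset_uIcc_left (mem_uIcc_of_le hax hxc))

theorem setIntegral_setOf_primitive_pos_eq_zero {g : ℝ → ℝ} {a c : ℝ} (hac : a ≤ c)
    (hg : IntervalIntegrable g volume a c) (hgc : ∫ s in a..c, g s ≤ 0) :
    ∫ s in {t ∈ Ioo a c | 0 < ∫ u in a..t, g u}, g s = 0 := by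
  set F := fun t => ∫ u in a..t, g u
  have hF := hg.continuousOn_primitive_Icc hac
  have := (excursions_countable F a c).to_subtype
  rw [setOf_pos_eq_biUnion_excursions hF (by simp) hgc, biUnion_eq_iUnion,
    integral_iUnion (fun _ => measurableSet_Ioo) ((excursions_pairwiseDisjoint F a c).subtype _ _)]
  · refine (tsum_congr fun ⟨I, hI₁₂, haI, hIc, hFI₁, hFI₂, _⟩ => ?_).trans tsum_zero
    rw [← integral_Ioc_eq_integral_Ioo, ← integral_of_le hI₁₂.le,
      ← integral_interval_sub_left (hg.mono_right_of_le (haI.trans hI₁₂.le) hIc)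
        (hg.mono_right_of_le haI (hI₁₂.le.trans hIc))]
    exact sub_eq_zero.2 (hFI₂.trans hFI₁.symm)
  · refine hg.1.mono_set (iUnion_subset fun ⟨I, _, haI, hIc, _⟩ => ?_)
    exact Ioo_subset_Ioc_self.trans (Ioc_subset_Ioc haI hIc)

theorem setIntegral_Ioc_inter_setOf_primitive_pos {g : ℝ → ℝ} {a c t : ℝ} (hac : a ≤ c)
    (hg : IntervalIntegrable g volume a c) (hgc : ∫ s in a..c, g s ≤ 0) (ht : t ∈ Icc a c) :
    ∫ s in Ioc a t ∩ {u ∈ Ioo a c | 0 < ∫ v in a..u, g v}, g s =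
      max (∫ s in a..t, g s) 0 := by
  set F := fun u => ∫ v in a..u, g v
  have hgt := hg.mono_right_of_le ht.1 ht.2
  have hIoc_inter {x : ℝ} (hxc : x ≤ c) (hFx : F x ≤ 0) :
      Ioc a x ∩ {u ∈ Ioo a c | 0 < F u} = {u ∈ Ioo a x | 0 < F u} := by
    ext u
    simp only [mem_inter_iff, mem_Ioc, mem_Ioo]
    refine ⟨fun ⟨⟨hau, hux⟩, _, hFu⟩ => ⟨⟨hau, hux.lt_of_ne ?_⟩, hFu⟩,
      fun ⟨⟨hau, hux⟩, hFu⟩ => ⟨⟨hau, hux.le⟩, ⟨hau, hux.trans_le hxc⟩, hFu⟩⟩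
    rintro rfl
    exact hFx.not_gt hFu
  rcases le_or_gt (F t) 0 with hFt | hFt
  · rw [max_eq_right hFt, hIoc_inter ht.2 hFt]
    exact setIntegral_setOf_primitive_pos_eq_zero ht.1 hgt hFt
  obtain ⟨α, hα, hFα, hpos⟩ := exists_last_zero_of_nonpos_of_pos ht.1
    ((hg.continuousOn_primitive_Icc hac).mono (Icc_subset_Icc le_rfl ht.2)) (by simp) hFt
  have htc : t < c := ht.2.lt_of_ne fun h => (h ▸ hgc : F t ≤ 0).not_gt hFt
  have hsplit : Ioc a t ∩ {u ∈ Ioo a c | 0 < F u} =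
      (Ioc a α ∩ {u ∈ Ioo a c | 0 < F u}) ∪ Ioc α t := by
    ext u
    simp only [mem_inter_iff, mem_Ioc, mem_Ioo, mem_union]
    constructor
    · rintro ⟨⟨hau, hut⟩, hU⟩
      exact (le_or_gt u α).imp (fun huα => ⟨⟨hau, huα⟩, hU⟩) fun hαu => ⟨hαu, hut⟩
    · rintro (⟨⟨hau, huα⟩, hU⟩ | ⟨hαu, hut⟩)
      · exact ⟨⟨hau, huα.trans hα.2.le⟩, hU⟩
      · have hau := hα.1.trans_lt hαu
        exact ⟨⟨hau, hut⟩, ⟨hau, hut.trans_lt htc⟩, hpos u ⟨hαu, hut⟩⟩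
  have hdisj : Disjoint (Ioc a α ∩ {u ∈ Ioo a c | 0 < F u}) (Ioc α t) :=
    Set.disjoint_left.2 fun u hu hu' => hu'.1.not_ge hu.1.2
  have hgα := hg.mono_right_of_le hα.1 (hα.2.le.trans ht.2)
  rw [hsplit, setIntegral_union hdisj measurableSet_Ioc
      (hg.1.mono_set (inter_subset_left.trans (Ioc_subset_Ioc le_rfl (hα.2.le.trans ht.2))))
      (hg.1.mono_set (Ioc_subset_Ioc hα.1 ht.2)),
    hIoc_inter (hα.2.le.trans ht.2) hFα.le,
    setIntegral_setOf_primitive_pos_eq_zero hα.1 hgα hFα.le, ← integral_of_le hα.2.le,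
    ← integral_interval_sub_left hgt hgα, max_eq_left hFt.le]
  simp [F, hFα]

namespace IsRateFunction

variable {r : ℝ → ℝ}

theorem nonneg (hr : IsRateFunction r) {x : ℝ} (hx : 0 ≤ x) : 0 ≤ r x :=
  hr.2.2.2.1 ▸ hr.2.1.monotoneOn self_mem_Ici hx hx

theorem exists_eq (hr : IsRateFunction r) {m : ℝ} (hm : 0 ≤ m) : ∃ c, 0 ≤ c ∧ r c = m := by
  obtain ⟨y, hmy, hy⟩ := ((hr.2.2.2.2.eventually_ge_atTop m).and (eventually_ge_atTop 0)).exists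
  obtain ⟨c, hc, hrc⟩ := intermediate_value_Icc hy (hr.1.mono Icc_subset_Ici_self)
    ⟨hr.2.2.2.1.symm ▸ hm, hmy⟩
  exact ⟨c, hc.1, hrc⟩

end IsRateFunction

theorem setIntegral_sub_const_nonneg_of_concaveOn {α : Type*} [MeasurableSpace α]
    {μ : Measure α} {p : α → ℝ} {A : Set α} {c : ℝ} {r : ℝ → ℝ}
    (hconc : ConcaveOn ℝ (Ici 0) r) (hcont : ContinuousOn r (Ici 0))
    (hmono : StrictMonoOn r (Ici 0)) (hμA : μ A ≠ ⊤) (hp0 : ∀ᵐ x ∂μ.restrict A, 0 ≤ p x)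
    (hp : IntegrableOn p A μ) (hrp : IntegrableOn (fun x => r (p x)) A μ) (hc : 0 ≤ c)
    (hle : 0 ≤ ∫ x in A, (r (p x) - r c) ∂μ) : 0 ≤ ∫ x in A, (p x - c) ∂μ := by
  rw [integral_sub hrp (integrableOn_const hμA), setIntegral_const, smul_eq_mul,
    sub_nonneg] at hle
  rw [integral_sub hp (integrableOn_const hμA), setIntegral_const, smul_eq_mul, sub_nonneg]
  rcases eq_or_ne (μ A) 0 with hA0 | hA0
  · simp [Measure.real, hA0, Measure.restrict_eq_zero.2 hA0]
  have hμpos : 0 < μ.real A := ENNReal.toReal_pos hA0 hμA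
  have havg : r c ≤ r (⨍ x in A, p x ∂μ) := by
    refine le_trans ?_ (hconc.le_map_set_average hcont isClosed_Ici hA0 hμA hp0 hp hrp)
    rw [setAverage_eq, smul_eq_mul, inv_mul_eq_div, le_div_iff₀ hμpos, mul_comm]
    exact hle
  have hmean0 : 0 ≤ ⨍ x in A, p x ∂μ := by
    rw [setAverage_eq, smul_eq_mul]
    exact mul_nonneg (inv_nonneg.2 hμpos.le) (integral_nonneg_of_ae hp0)
  have hcmean := (hmono.le_iff_le hc hmean0).1 havg
  rwa [setAverage_eq, smul_eq_mul, inv_mul_eq_div, le_div_iff₀ hμpos, mul_comm] at hcmean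

section Feasibility

variable {T : ℝ} {Es Er Bs rsr rrd psr prd : ℝ → ℝ}

theorem Feasible.mono_data {E B B' r p : ℝ → ℝ} (hp : Feasible T E B r p)
    (hB : ∀ t ∈ Icc 0 T, B t ≤ B' t) : Feasible T E B' r p :=
  ⟨hp.1, hp.2.1, hp.2.2.1, hp.2.2.2.1, fun t ht => (hp.2.2.2.2 t ht).trans (hB t ht)⟩

theorem TwoHopFeasible.feasible_source (h : TwoHopFeasible T Es Er Bs rsr rrd psr prd) :
    Feasible T Es Bs rsr psr :=
  ⟨h.1, h.2.2.1, fun t ht => (h.2.2.2.2.1 t ht).1, h.2.2.2.2.2.1, h.2.2.2.2.2.2.2.1⟩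

theorem TwoHopFeasible.feasible_relay (h : TwoHopFeasible T Es Er Bs rsr rrd psr prd) :
    Feasible T Er (fun t => ∫ s in (0:ℝ)..t, rsr (psr s)) rrd prd :=
  ⟨h.2.1, h.2.2.2.1, fun t ht => (h.2.2.2.2.1 t ht).2, h.2.2.2.2.2.2.1, h.2.2.2.2.2.2.2.2⟩

theorem Feasible.twoHopFeasible (hsr : Feasible T Es Bs rsr psr)
    (hrd : Feasible T Er (fun t => ∫ s in (0:ℝ)..t, rsr (psr s)) rrd prd) :
    TwoHopFeasible T Es Er Bs rsr rrd psr prd :=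
  ⟨hsr.1, hrd.1, hsr.2.1, hrd.2.1, fun t ht => ⟨hsr.2.2.1 t ht, hrd.2.2.1 t ht⟩, hsr.2.2.2.1,
    hrd.2.2.2.1, hsr.2.2.2.2, hrd.2.2.2.2⟩

end Feasibility

theorem piecewise_const_eq_sub_indicator (U : Set ℝ) [DecidablePred (· ∈ U)] (c : ℝ)
    (f : ℝ → ℝ) :
    U.piecewise (fun _ => c) f = fun s => f s - U.indicator (fun s => f s - c) s := by
  ext s
  by_cases hs : s ∈ U <;> simp [hs]

theorem IntervalIntegrable.indicator_sub_const {f : ℝ → ℝ} {U : Set ℝ} {a b c : ℝ} (hab : a ≤ b)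
    (hf : IntervalIntegrable f volume a b) (hU : MeasurableSet U) :
    IntervalIntegrable (U.indicator fun s => f s - c) volume a b := by
  have hfc := hf.sub (intervalIntegrable_const (c := c))
  rw [intervalIntegrable_iff_integrableOn_Ioc_of_le hab] at hfc ⊢
  exact hfc.indicator hU

theorem IntervalIntegrable.piecewise_const {f : ℝ → ℝ} {U : Set ℝ} [DecidablePred (· ∈ U)]
    {a b c : ℝ} (hab : a ≤ b) (hf : IntervalIntegrable f volume a b) (hU : MeasurableSet U) :
    IntervalIntegrable (U.piecewise (fun _ => c) f) volume a b := by
  rw [piecewise_const_eq_sub_indicator]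
  exact hf.sub (hf.indicator_sub_const hab hU)

theorem intervalIntegral_piecewise_const {f : ℝ → ℝ} {U : Set ℝ} [DecidablePred (· ∈ U)]
    {a b c : ℝ} (hab : a ≤ b) (hf : IntervalIntegrable f volume a b) (hU : MeasurableSet U) :
    ∫ s in a..b, U.piecewise (fun _ => c) f s =
      (∫ s in a..b, f s) - ∫ s in Ioc a b ∩ U, (f s - c) := by
  rw [piecewise_const_eq_sub_indicator, integral_sub hf (hf.indicator_sub_const hab hU),
    integral_of_le hab (f := U.indicator _), setIntegral_indicator hU]

theorem intervalIntegral_piecewise_const_le_of_concaveOn {p r : ℝ → ℝ} {U : Set ℝ}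
    [DecidablePred (· ∈ U)] {a b c : ℝ} (hconc : ConcaveOn ℝ (Ici 0) r)
    (hcont : ContinuousOn r (Ici 0)) (hmono : StrictMonoOn r (Ici 0)) (hab : a ≤ b)
    (hp : IntervalIntegrable p volume a b) (hrp : IntervalIntegrable (fun s => r (p s)) volume a b)
    (hp0 : ∀ s ∈ Ioc a b, 0 ≤ p s) (hU : MeasurableSet U) (hc : 0 ≤ c)
    (hrate : 0 ≤ ∫ s in Ioc a b ∩ U, (r (p s) - r c)) :
    ∫ s in a..b, U.piecewise (fun _ => c) p s ≤ ∫ s in a..b, p s := by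
  rw [intervalIntegral_piecewise_const hab hp hU, sub_le_self_iff]
  exact setIntegral_sub_const_nonneg_of_concaveOn hconc hcont hmono
    ((measure_mono inter_subset_left).trans_lt measure_Ioc_lt_top).ne
    ((ae_restrict_mem (measurableSet_Ioc.inter hU)).mono fun s hs => hp0 s hs.1)
    (hp.1.mono_set inter_subset_left) (hrp.1.mono_set inter_subset_left) hc hrate

theorem Feasible.exists_feasible_linear_data {T m : ℝ} {E B r p : ℝ → ℝ} (hT : 0 < T)
    (hr : IsRateFunction r) (hp : Feasible T E B r p) (hBT : B T ≤ m * T) :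
    ∃ q, Feasible T E (fun t => m * t) r q ∧
      ∫ t in (0:ℝ)..T, r (q t) = ∫ t in (0:ℝ)..T, r (p t) := by
  obtain ⟨hpi, hrpi, hp0, hpE, hpB⟩ := hp
  have hT' : T ∈ Icc 0 T := right_mem_Icc.2 hT.le
  have hm : 0 ≤ m := by
    refine nonneg_of_mul_nonneg_left ?_ hT
    exact (integral_nonneg hT.le fun s hs => hr.nonneg (hp0 s hs)).trans ((hpB T hT').trans hBT)
  obtain ⟨c, hc, hrc⟩ := hr.exists_eq hm
  have hgi : IntervalIntegrable (fun s => r (p s) - m) volume 0 T :=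
    hrpi.sub intervalIntegrable_const
  have hG : ∀ t ∈ Icc 0 T,
      ∫ s in (0:ℝ)..t, (r (p s) - m) = (∫ s in (0:ℝ)..t, r (p s)) - m * t := by
    intro t ht
    rw [integral_sub (hrpi.mono_right_of_le ht.1 ht.2) intervalIntegrable_const,
      intervalIntegral.integral_const, smul_eq_mul, sub_zero, mul_comm]
  have hGT : ∫ s in (0:ℝ)..T, (r (p s) - m) ≤ 0 := by
    rw [hG T hT']
    linarith [hpB T hT']
  set U := {t ∈ Ioo 0 T | 0 < ∫ s in (0:ℝ)..t, (r (p s) - m)}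
  have hU : MeasurableSet U :=
    (((hgi.continuousOn_primitive_Icc hT.le).mono Ioo_subset_Icc_self).isOpen_inter_preimage
      isOpen_Ioo isOpen_Ioi).measurableSet
  have hrq : (fun s => r (U.piecewise (fun _ => c) p s)) =
      U.piecewise (fun _ => m) fun s => r (p s) := by
    ext s
    by_cases hs : s ∈ U <;> simp [hs, hrc]
  have hdata : ∀ t ∈ Icc 0 T, ∫ s in (0:ℝ)..t, r (U.piecewise (fun _ => c) p s) =
      (∫ s in (0:ℝ)..t, r (p s)) - max (∫ s in (0:ℝ)..t, (r (p s) - m)) 0 := by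
    intro t ht
    rw [hrq, intervalIntegral_piecewise_const ht.1 (hrpi.mono_right_of_le ht.1 ht.2) hU,
      setIntegral_Ioc_inter_setOf_primitive_pos hT.le hgi hGT ht]
  have henergy : ∀ t ∈ Icc 0 T,
      ∫ s in (0:ℝ)..t, U.piecewise (fun _ => c) p s ≤ ∫ s in (0:ℝ)..t, p s := by
    intro t ht
    refine intervalIntegral_piecewise_const_le_of_concaveOn hr.2.2.1 hr.1 hr.2.1 ht.1
      (hpi.mono_right_of_le ht.1 ht.2) (hrpi.mono_right_of_le ht.1 ht.2)
      (fun s hs => hp0 s ⟨hs.1.le, hs.2.trans ht.2⟩) hU hc ?_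
    rw [hrc, setIntegral_Ioc_inter_setOf_primitive_pos hT.le hgi hGT ht]
    exact le_max_right _ _
  refine ⟨U.piecewise (fun _ => c) p, ⟨hpi.piecewise_const hT.le hU, ?_, fun t ht => ?_,
    fun t ht => (henergy t ht).trans (hpE t ht), fun t ht => ?_⟩, ?_⟩
  · rw [hrq]
    exact hrpi.piecewise_const hT.le hU
  · by_cases hs : t ∈ U <;> simp [hs, hc, hp0 t ht]
  · rw [hdata t ht]
    linarith [hG t ht, le_max_left (∫ s in (0:ℝ)..t, (r (p s) - m)) 0]
  · rw [hdata T hT', max_eq_right hGT, sub_zero]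

theorem eq_mul_of_eq_affine_on_Ioo {f : ℝ → ℝ} {T m k : ℝ} (hT : 0 < T)
    (hf : ContinuousOn f (Icc 0 T)) (hf0 : f 0 = 0) (hfaff : ∀ t ∈ Ioo 0 T, f t = m * t + k) :
    ∀ t ∈ Icc 0 T, f t = m * t := by
  have heq : EqOn f (fun t => m * t + k) (Icc 0 T) :=
    EqOn.of_subset_closure hfaff hf (by fun_prop) Ioo_subset_Icc_self (closure_Ioo hT.ne).ge
  have hk : k = 0 := by simpa [hf0] using (heq (left_mem_Icc.2 hT.le)).symm
  intro t ht
  simpa [hk] using heq ht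

theorem twoHop_decomposition_general
    (T : ℝ) (hT : 0 < T)
    (Es Er Bs : ℝ → ℝ)
    (rsr rrd : ℝ → ℝ)
    (hrrd : IsRateFunction rrd)
    (pstar : ℝ → ℝ) (hpstar : Feasible T Es Bs rsr pstar)
    (Bstar : ℝ → ℝ)
    (hBstar_def : ∀ t ∈ Set.Icc (0:ℝ) T, Bstar t = ∫ s in (0:ℝ)..t, rsr (pstar s))
    -- (ii) `B*` maximizes the final transmitted data over the first hop
    (hBstar_max : ∀ p : ℝ → ℝ, Feasible T Es Bs rsr p →
      (∫ s in (0:ℝ)..T, rsr (p s)) ≤ Bstar T)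
    -- (iii) on every open subinterval of `[0,T]` on which `B*` is not affine,
    -- `B*` pointwise dominates every feasible transmitted data curve
    (hBstar_ptwise : ∀ a b : ℝ, 0 ≤ a → a < b → b ≤ T →
      ¬ (∃ mc : ℝ × ℝ, ∀ t ∈ Set.Ioo a b, Bstar t = mc.1 * t + mc.2) →
      ∀ p : ℝ → ℝ, Feasible T Es Bs rsr p →
        ∀ t ∈ Set.Ioo a b, (∫ s in (0:ℝ)..t, rsr (p s)) ≤ Bstar t) :
    sSup {x : ℝ | ∃ psr prd : ℝ → ℝ,
        TwoHopFeasible T Es Er Bs rsr rrd psr prd ∧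
        x = ∫ t in (0:ℝ)..T, rrd (prd t)} =
    sSup {x : ℝ | ∃ p : ℝ → ℝ, Feasible T Er Bstar rrd p ∧
        x = ∫ t in (0:ℝ)..T, rrd (p t)} := by
  have hT' : T ∈ Icc 0 T := right_mem_Icc.2 hT.le
  have hB0 : Bstar 0 = 0 := by simp [hBstar_def 0 (left_mem_Icc.2 hT.le)]
  refine csSup_eq_csSup_of_forall_exists_le ?_ fun _ ⟨p, hp, hx⟩ =>
    ⟨_, ⟨pstar, p, hpstar.twoHopFeasible (hp.mono_data fun t ht => (hBstar_def t ht).le), hx⟩,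
      le_rfl⟩
  rintro _ ⟨psr, prd, h, rfl⟩
  by_cases haff : ∃ mc : ℝ × ℝ, ∀ t ∈ Ioo 0 T, Bstar t = mc.1 * t + mc.2
  · obtain ⟨⟨m, k⟩, hmk⟩ := haff
    have hBcont : ContinuousOn Bstar (Icc 0 T) :=
      (hpstar.2.1.continuousOn_primitive_Icc hT.le).congr hBstar_def
    have hlin := eq_mul_of_eq_affine_on_Ioo hT hBcont hB0 hmk
    obtain ⟨q, hq, hqval⟩ := h.feasible_relay.exists_feasible_linear_data hT hrrd
      ((hBstar_max psr h.feasible_source).trans (hlin T hT').le)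
    exact ⟨_, ⟨q, hq.mono_data fun t ht => (hlin t ht).ge, rfl⟩, hqval.ge⟩
  · refine ⟨_, ⟨prd, h.feasible_relay.mono_data fun t ht => ?_, rfl⟩, le_rfl⟩
    rcases ht.1.eq_or_lt with rfl | h0t
    · simp [hB0]
    rcases ht.2.eq_or_lt with rfl | htT
    · exact hBstar_max psr h.feasible_source
    · exact hBstar_ptwise 0 T le_rfl hT le_rfl haff psr h.feasible_source t ⟨h0t, htT⟩

/-- Theorem 3.1 (relay optimal policy): the two-hop maximum throughput equals the
maximum point-to-point throughput at the relay when the arrival data curve at the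
relay is the first-hop optimal transmitted data curve `B*`. -/
theorem twoHop_decomposition
    (T : ℝ) (hT : 0 < T)
    (Es Er Bs : ℝ → ℝ)
    (hEs_nonneg : ∀ t ∈ Set.Icc (0:ℝ) T, 0 ≤ Es t)
    (hEs_mono : MonotoneOn Es (Set.Icc 0 T))
    (hEr_nonneg : ∀ t ∈ Set.Icc (0:ℝ) T, 0 ≤ Er t)
    (hEr_mono : MonotoneOn Er (Set.Icc 0 T))
    (hBs_nonneg : ∀ t ∈ Set.Icc (0:ℝ) T, 0 ≤ Bs t)
    (hBs_mono : MonotoneOn Bs (Set.Icc 0 T))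
    (rsr rrd : ℝ → ℝ)
    (hrsr : IsRateFunction rsr) (hrrd : IsRateFunction rrd)
    (pstar : ℝ → ℝ) (hpstar : Feasible T Es Bs rsr pstar)
    (Bstar : ℝ → ℝ)
    (hBstar_def : ∀ t ∈ Set.Icc (0:ℝ) T, Bstar t = ∫ s in (0:ℝ)..t, rsr (pstar s))
    -- (i) `B*` is convex
    (hBstar_convex : ConvexOn ℝ (Set.Icc 0 T) Bstar)
    -- (ii) `B*` maximizes the final transmitted data over the first hop
    (hBstar_max : ∀ p : ℝ → ℝ, Feasible T Es Bs rsr p →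
      (∫ s in (0:ℝ)..T, rsr (p s)) ≤ Bstar T)
    -- (iii) on every open subinterval of `[0,T]` on which `B*` is not affine,
    -- `B*` pointwise dominates every feasible transmitted data curve
    (hBstar_ptwise : ∀ a b : ℝ, 0 ≤ a → a < b → b ≤ T →
      ¬ (∃ mc : ℝ × ℝ, ∀ t ∈ Set.Ioo a b, Bstar t = mc.1 * t + mc.2) →
      ∀ p : ℝ → ℝ, Feasible T Es Bs rsr p →
        ∀ t ∈ Set.Ioo a b, (∫ s in (0:ℝ)..t, rsr (p s)) ≤ Bstar t) :
    sSup {x : ℝ | ∃ psr prd : ℝ → ℝ,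
        TwoHopFeasible T Es Er Bs rsr rrd psr prd ∧
        x = ∫ t in (0:ℝ)..T, rrd (prd t)} =
    sSup {x : ℝ | ∃ p : ℝ → ℝ, Feasible T Er Bstar rrd p ∧
        x = ∫ t in (0:ℝ)..T, rrd (p t)} :=
  twoHop_decomposition_general T hT Es Er Bs rsr rrd hrrd pstar hpstar Bstar hBstar_def hBstar_max
    hBstar_ptwise
end
end

section
/- Let T > 0, let E_s : [0,T] → [0,∞) be nondecreasing, B_s : [0,T] → [0,∞) nondecreasing, and r_sr a rate function. Let B* : [0,T] → [0,∞) be convex, nondecreasing and piecewise continuously differentiable with B*(0) = 0, B*(t) ≤ B_s(t) and ∫₀ᵗ r_sr⁻¹(B*'(s)) ds ≤ E_s(t) for all t ∈ [0,T]. Let D₀ ∈ [0, B*(T)] and let l(t) = D₀ + m·(t − T) be an affine function satisfying l(t) ≤ B*(t) for all t ∈ [0,T] and l(T₁) = B*(T₁) for some T₁ ∈ [0,T] (l is the tangent line to B* through the point (T, D₀)). Define B̂(t) = B*(t) for 0 ≤ t ≤ T₁ and B̂(t) = l(t) for T₁ ≤ t ≤ T. Then B̂ is nondecreasing and convex, and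 B̂ is itself a feasible source transmitted data curve: B̂(t) ≤ B_s(t) and ∫₀ᵗ r_sr⁻¹(B̂'(s)) ds ≤ E_s(t) for all t ∈ [0,T]. -/
/-!
`B̂` is `B*` up to the tangency point `T₁`, continued by the tangent line `l` of slope `m`.
Since `l(0) ≤ B*(0) = 0 ≤ D₀ = l(T)`, the slope `m` is nonnegative, and since `l` supports `B*`
at `T₁`, gluing it on keeps the curve nondecreasing and convex. As `l ≤ B*`, the data constraint
is inherited. For the energy, convexity bounds `B*'(s)` for `s > T₁` below by the slope of the
chord from `T₁`, hence by `m`; so `0 ≤ B̂' ≤ B*'` almost everywhere, and `r⁻¹` being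
nondecreasing, the energy integrand of `B̂` is dominated by that of `B*`.
-/

open MeasureTheory Set Filter intervalIntegral

noncomputable section

/-- `φ` is the inverse of the rate function `r` on `[0,∞)`. -/
def IsInverseOn (φ r : ℝ → ℝ) : Prop :=
  (∀ p : ℝ, 0 ≤ p → φ (r p) = p) ∧ (∀ y : ℝ, 0 ≤ y → r (φ y) = y) ∧
    (∀ y : ℝ, 0 ≤ y → 0 ≤ φ y)

/-- `f` is piecewise continuously differentiable on `[a,b]` with derivative `f'`:
`f` is continuous, differentiable with derivative `f'` off a finite set, and `f'`
is piecewise continuous and bounded. -/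
def PiecewiseC1On (a b : ℝ) (f f' : ℝ → ℝ) : Prop :=
  ContinuousOn f (Set.Icc a b) ∧
  (∃ s : Finset ℝ, (∀ t ∈ Set.Ioo a b, t ∉ s → HasDerivAt f (f' t) t) ∧
    ContinuousOn f' (Set.Icc a b \ (s : Set ℝ))) ∧
  (∃ M : ℝ, ∀ t ∈ Set.Icc a b, |f' t| ≤ M)

def affineContinuation (f : ℝ → ℝ) (b m : ℝ) (x : ℝ) : ℝ :=
  if x ≤ b then f x else f b + m * (x - b)

theorem affineContinuation_le {f : ℝ → ℝ} {b m x : ℝ} (h : f b + m * (x - b) ≤ f x) :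
    affineContinuation f b m x ≤ f x := by
  unfold affineContinuation
  split_ifs
  exacts [le_rfl, h]

section Gluing

variable {f : ℝ → ℝ} {a b c m : ℝ}

theorem MonotoneOn.affineContinuation (hf : MonotoneOn f (Icc a b)) (hm : 0 ≤ m) :
    MonotoneOn (affineContinuation f b m) (Icc a c) := by
  intro x hx y hy hxy
  simp only [_root_.affineContinuation]
  split_ifs with hxb hyb hyb
  · exact hf ⟨hx.1, hxb⟩ ⟨hx.1.trans hxy, hyb⟩ hxy
  · have : f x ≤ f b := hf ⟨hx.1, hxb⟩ ⟨hx.1.trans hxb, le_rfl⟩ hxb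
    nlinarith
  · linarith
  · nlinarith

theorem ConvexOn.affineContinuation (hf : ConvexOn ℝ (Icc a b) f)
    (hsub : ∀ x ∈ Icc a b, f b + m * (x - b) ≤ f x) :
    ConvexOn ℝ (Icc a c) (affineContinuation f b m) := by
  refine convexOn_iff_slope_mono_adjacent.mpr ⟨convex_Icc a c, fun {x y z} hx hz hxy hyz => ?_⟩
  simp only [_root_.affineContinuation]
  rcases le_or_gt z b with hzb | hbz
  · rw [if_pos hzb, if_pos (hyz.le.trans hzb), if_pos ((hxy.trans hyz).le.trans hzb)]
    exact hf.slope_mono_adjacent ⟨hx.1, by linarith⟩ ⟨by linarith [hx.1], hzb⟩ hxy hyz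
  rw [if_neg (not_le.mpr hbz)]
  rcases le_or_gt y b with hyb | hby
  · rw [if_pos hyb, if_pos (hxy.le.trans hyb)]
    have hxb : x ∈ Icc a b := ⟨hx.1, by linarith⟩
    set s := (f y - f x) / (y - x) with hs_def
    set σ := (f b - f x) / (b - x) with hσ_def
    -- the chord from `x` to `y` is at most as steep as the one from `x` to `b`, which is at
    -- most as steep as the supporting line of slope `m` at `b`
    have hsσ : s ≤ σ :=
      hf.secant_mono hxb ⟨by linarith [hx.1], hyb⟩ ⟨by linarith [hx.1], le_rfl⟩ hxy.ne'
        (by linarith) hyb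
    have hσm : σ ≤ m := by
      rw [hσ_def, div_le_iff₀ (by linarith)]
      linarith [hsub x hxb]
    have hs : f y - f x = s * (y - x) := (div_mul_cancel₀ _ (by linarith)).symm
    have hσ : f b - f x = σ * (b - x) := (div_mul_cancel₀ _ (by linarith)).symm
    rw [le_div_iff₀ (by linarith)]
    nlinarith [mul_nonneg (sub_nonneg.2 hsσ) (by linarith : (0:ℝ) ≤ b - x),
      mul_nonneg (sub_nonneg.2 (hsσ.trans hσm)) (by linarith : (0:ℝ) ≤ z - b)]
  · rw [if_neg (not_le.mpr hby)]
    have hrhs : (f b + m * (z - b) - (f b + m * (y - b))) / (z - y) = m := by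
      field_simp; ring
    rw [hrhs]
    split_ifs with hxb
    · have := hsub x ⟨hx.1, hxb⟩
      rw [div_le_iff₀ (by linarith)]
      nlinarith
    · rw [div_le_iff₀ (by linarith)]
      nlinarith

end Gluing

theorem ConvexOn.le_of_hasDerivAt {S : Set ℝ} {f : ℝ → ℝ} {x y c d : ℝ} (hf : ConvexOn ℝ S f)
    (hx : x ∈ S) (hy : y ∈ S) (hxy : x < y) (hc : f x + c * (y - x) ≤ f y)
    (hd : HasDerivAt f d y) : c ≤ d := by
  refine le_trans ?_ (hf.slope_le_of_hasDerivAt hx hy hxy hd)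
  rw [slope_def_field, le_div_iff₀ (sub_pos.2 hxy)]
  linarith

theorem IsInverseOn.monotoneOn {φ r : ℝ → ℝ} (hφ : IsInverseOn φ r)
    (hr : StrictMonoOn r (Ici 0)) : MonotoneOn φ (Ici 0) := by
  intro y hy z hz hyz
  rwa [← hr.le_iff_le (hφ.2.2 y hy) (hφ.2.2 z hz), hφ.2.1 y hy, hφ.2.1 z hz]

theorem ContinuousOn.aemeasurable_of_diff_null {α β : Type*} [TopologicalSpace α]
    [MeasurableSpace α] [OpensMeasurableSpace α] [TopologicalSpace β] [MeasurableSpace β]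
    [BorelSpace β] {f : α → β} {s S : Set α} {μ : Measure α} (hf : ContinuousOn f (s \ S))
    (hs : MeasurableSet s) (hS : μ S = 0) : AEMeasurable f (μ.restrict s) := by
  rw [← Measure.restrict_congr_set (sdiff_null_ae_eq_self hS)]
  exact hf.aemeasurable₀ (hs.nullMeasurableSet.diff (NullMeasurableSet.of_null hS))

section Composition

variable {α : Type*} [MeasurableSpace α] {μ : Measure α} [IsFiniteMeasure μ] {φ : ℝ → ℝ}

theorem MonotoneOn.integrable_comp {g : α → ℝ} {a M : ℝ} (hφ : MonotoneOn φ (Ici a))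
    (hg : AEMeasurable g μ) (hgM : ∀ᵐ x ∂μ, g x ∈ Icc a M) : Integrable (fun x ↦ φ (g x)) μ := by
  -- `φ` agrees along `g` with the globally monotone, hence measurable, `y ↦ φ (max y a)`
  have hψ : Monotone fun y ↦ φ (max y a) := fun y z hyz ↦
    hφ (le_max_right y a) (le_max_right z a) (max_le_max_right a hyz)
  have hφg : (fun x ↦ φ (max (g x) a)) =ᵐ[μ] fun x ↦ φ (g x) := by
    filter_upwards [hgM] with x hx
    rw [max_eq_left hx.1]
  refine Integrable.congr ?_ hφg
  refine .of_bound (hψ.measurable.comp_aemeasurable hg).aestronglyMeasurable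
    (max |φ a| |φ M|) ?_
  filter_upwards [hgM] with x hx
  rw [max_eq_left hx.1, Real.norm_eq_abs]
  exact abs_le_max_abs_abs (hφ self_mem_Ici hx.1 hx.1) (hφ hx.1 (hx.1.trans hx.2) hx.2)

theorem MonotoneOn.integral_comp_le_integral_comp {u v : α → ℝ} {M : ℝ}
    (hφ : MonotoneOn φ (Ici 0)) (hφ₀ : 0 ≤ φ 0) (hv : AEMeasurable v μ)
    (huv : ∀ᵐ x ∂μ, 0 ≤ u x ∧ u x ≤ v x ∧ v x ≤ M) :
    ∫ x, φ (u x) ∂μ ≤ ∫ x, φ (v x) ∂μ := by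
  refine integral_mono_of_nonneg ?_ ?_ ?_
  · filter_upwards [huv] with x ⟨hu, _⟩
    exact hφ₀.trans (hφ self_mem_Ici hu hu)
  · refine hφ.integrable_comp (M := M) hv ?_
    filter_upwards [huv] with x ⟨hu, huv, hvM⟩
    exact ⟨hu.trans huv, hvM⟩
  · filter_upwards [huv] with x ⟨hu, huv, _⟩
    exact hφ hu (hu.trans huv) huv

end Composition

theorem PiecewiseC1On.integral_comp_le_integral_comp {φ f f' u : ℝ → ℝ} {a b t : ℝ}
    (hf : PiecewiseC1On a b f f') (hφ : MonotoneOn φ (Ici 0)) (hφ₀ : 0 ≤ φ 0) (ht : t ∈ Icc a b)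
    (hu : ∀ s ∈ Ioo a b, HasDerivAt f (f' s) s → 0 ≤ u s ∧ u s ≤ f' s) :
    ∫ s in a..t, φ (u s) ≤ ∫ s in a..t, φ (f' s) := by
  obtain ⟨-, ⟨S, hderiv, hcont⟩, M, hM⟩ := hf
  have hIoc : Ioc a t ⊆ Icc a b := Ioc_subset_Icc_self.trans (Icc_subset_Icc le_rfl ht.2)
  have : IsFiniteMeasure (volume.restrict (Ioc a t)) :=
    isFiniteMeasure_restrict.2 measure_Ioc_lt_top.ne
  rw [integral_of_le ht.1, integral_of_le ht.1]
  refine hφ.integral_comp_le_integral_comp (M := M) hφ₀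
    ((hcont.mono (sdiff_subset_sdiff_left hIoc)).aemeasurable_of_diff_null measurableSet_Ioc
      (S.finite_toSet.measure_zero _)) ?_
  filter_upwards [ae_restrict_mem measurableSet_Ioc,
    ae_restrict_of_ae ((S.finite_toSet.insert b).countable.ae_notMem volume)] with s hs hsbS
  obtain ⟨hsb, hsS⟩ : s ≠ b ∧ s ∉ S := by simpa using hsbS
  have hs' : s ∈ Ioo a b := ⟨hs.1, (hIoc hs).2.lt_of_ne hsb⟩
  obtain ⟨hu₀, huf⟩ := hu s hs' (hderiv s hs' hsS)
  exact ⟨hu₀, huf, le_of_abs_le (hM s (hIoc hs))⟩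

theorem truncated_tangent_policy_feasible_general
    (T : ℝ) (hT : 0 < T)
    (Es Bs : ℝ → ℝ)
    (rsr φ : ℝ → ℝ) (hrsr : IsRateFunction rsr) (hφ : IsInverseOn φ rsr)
    (Bstar Bstar' : ℝ → ℝ)
    (hBstar_convex : ConvexOn ℝ (Set.Icc 0 T) Bstar)
    (hBstar_mono : MonotoneOn Bstar (Set.Icc 0 T))
    (hBstar_pc1 : PiecewiseC1On 0 T Bstar Bstar')
    (hBstar_zero : Bstar 0 = 0)
    (hBstar_data : ∀ t ∈ Set.Icc (0:ℝ) T, Bstar t ≤ Bs t)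
    (hBstar_energy : ∀ t ∈ Set.Icc (0:ℝ) T, (∫ s in (0:ℝ)..t, φ (Bstar' s)) ≤ Es t)
    (D₀ m : ℝ) (hD₀ : D₀ ∈ Set.Icc 0 (Bstar T))
    (T₁ : ℝ) (hT₁ : T₁ ∈ Set.Icc (0:ℝ) T)
    -- `l t = D₀ + m (t - T)` is the tangent line to `B*` through `(T, D₀)`
    (hl_le : ∀ t ∈ Set.Icc (0:ℝ) T, D₀ + m * (t - T) ≤ Bstar t)
    (hl_touch : D₀ + m * (T₁ - T) = Bstar T₁)
    (Bhat Bhat' : ℝ → ℝ)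
    (hBhat_def : ∀ t, Bhat t = if t ≤ T₁ then Bstar t else D₀ + m * (t - T))
    (hBhat'_def : ∀ t, Bhat' t = if t ≤ T₁ then Bstar' t else m) :
    MonotoneOn Bhat (Set.Icc 0 T) ∧
    ConvexOn ℝ (Set.Icc 0 T) Bhat ∧
    (∀ t ∈ Set.Icc (0:ℝ) T, Bhat t ≤ Bs t) ∧
    (∀ t ∈ Set.Icc (0:ℝ) T, (∫ s in (0:ℝ)..t, φ (Bhat' s)) ≤ Es t) := by
  have hm : 0 ≤ m := by
    have := hl_le 0 ⟨le_rfl, hT.le⟩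
    rw [hBstar_zero] at this
    nlinarith [hD₀.1]
  have hl : ∀ t, D₀ + m * (t - T) = Bstar T₁ + m * (t - T₁) := fun t ↦ by rw [← hl_touch]; ring
  have hBhat : Bhat = affineContinuation Bstar T₁ m := funext fun t ↦ by rw [hBhat_def, hl]; rfl
  have hsub : ∀ t ∈ Icc 0 T, Bstar T₁ + m * (t - T₁) ≤ Bstar t := fun t ht ↦ hl t ▸ hl_le t ht
  have hT₁T : Icc 0 T₁ ⊆ Icc 0 T := Icc_subset_Icc le_rfl hT₁.2
  have hBhat' : ∀ s ∈ Ioo 0 T, HasDerivAt Bstar (Bstar' s) s →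
      0 ≤ Bhat' s ∧ Bhat' s ≤ Bstar' s := by
    intro s hs hd
    have hs' : s ∈ Icc 0 T := Ioo_subset_Icc_self hs
    have h0 : (0 : ℝ) ∈ Icc 0 T := left_mem_Icc.2 hT.le
    rw [hBhat'_def]
    split_ifs with hsT₁
    · refine ⟨hBstar_convex.le_of_hasDerivAt h0 hs' hs.1 ?_ hd, le_rfl⟩
      simpa using hBstar_mono h0 hs' hs.1.le
    · exact ⟨hm, hBstar_convex.le_of_hasDerivAt hT₁ hs' (not_le.1 hsT₁) (hsub s hs') hd⟩
  rw [hBhat]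
  refine ⟨(hBstar_mono.mono hT₁T).affineContinuation hm,
    (hBstar_convex.subset hT₁T (convex_Icc 0 T₁)).affineContinuation fun t ht ↦ hsub t (hT₁T ht),
    fun t ht ↦ (affineContinuation_le (hsub t ht)).trans (hBstar_data t ht),
    fun t ht ↦ ?_⟩
  obtain ⟨-, hr_mono, -⟩ := hrsr
  exact (hBstar_pc1.integral_comp_le_integral_comp (hφ.monotoneOn hr_mono) (hφ.2.2 0 le_rfl) ht
    hBhat').trans (hBstar_energy t ht)

/-- Step 1 in the proof of Theorem 3.2: the truncated-tangent-line source policy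
`B̂` is nondecreasing, convex, and is a feasible transmitted data curve for
`(E_s, B_s, r_sr)`. -/
theorem truncated_tangent_policy_feasible
    (T : ℝ) (hT : 0 < T)
    (Es Bs : ℝ → ℝ)
    (hEs_nonneg : ∀ t ∈ Set.Icc (0:ℝ) T, 0 ≤ Es t)
    (hEs_mono : MonotoneOn Es (Set.Icc 0 T))
    (hBs_nonneg : ∀ t ∈ Set.Icc (0:ℝ) T, 0 ≤ Bs t)
    (hBs_mono : MonotoneOn Bs (Set.Icc 0 T))
    (rsr φ : ℝ → ℝ) (hrsr : IsRateFunction rsr) (hφ : IsInverseOn φ rsr)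
    (Bstar Bstar' : ℝ → ℝ)
    (hBstar_convex : ConvexOn ℝ (Set.Icc 0 T) Bstar)
    (hBstar_mono : MonotoneOn Bstar (Set.Icc 0 T))
    (hBstar_nonneg : ∀ t ∈ Set.Icc (0:ℝ) T, 0 ≤ Bstar t)
    (hBstar_pc1 : PiecewiseC1On 0 T Bstar Bstar')
    (hBstar_zero : Bstar 0 = 0)
    (hBstar_data : ∀ t ∈ Set.Icc (0:ℝ) T, Bstar t ≤ Bs t)
    (hBstar_energy : ∀ t ∈ Set.Icc (0:ℝ) T, (∫ s in (0:ℝ)..t, φ (Bstar' s)) ≤ Es t)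
    (D₀ m : ℝ) (hD₀ : D₀ ∈ Set.Icc 0 (Bstar T))
    (T₁ : ℝ) (hT₁ : T₁ ∈ Set.Icc (0:ℝ) T)
    -- `l t = D₀ + m (t - T)` is the tangent line to `B*` through `(T, D₀)`
    (hl_le : ∀ t ∈ Set.Icc (0:ℝ) T, D₀ + m * (t - T) ≤ Bstar t)
    (hl_touch : D₀ + m * (T₁ - T) = Bstar T₁)
    (Bhat Bhat' : ℝ → ℝ)
    (hBhat_def : ∀ t, Bhat t = if t ≤ T₁ then Bstar t else D₀ + m * (t - T))
    (hBhat'_def : ∀ t, Bhat' t = if t ≤ T₁ then Bstar' t else m) :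
    MonotoneOn Bhat (Set.Icc 0 T) ∧
    ConvexOn ℝ (Set.Icc 0 T) Bhat ∧
    (∀ t ∈ Set.Icc (0:ℝ) T, Bhat t ≤ Bs t) ∧
    (∀ t ∈ Set.Icc (0:ℝ) T, (∫ s in (0:ℝ)..t, φ (Bhat' s)) ≤ Es t) :=
  truncated_tangent_policy_feasible_general T hT Es Bs rsr φ hrsr hφ Bstar Bstar' hBstar_convex
    hBstar_mono hBstar_pc1 hBstar_zero hBstar_data hBstar_energy D₀ m hD₀ T₁ hT₁ hl_le hl_touch Bhat
    Bhat' hBhat_def hBhat'_def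
end
end

section
/- Let r be a rate function and φ = r⁻¹ its (convex, strictly increasing, continuous) inverse. Let T > 0 and let B̂, B : [0,T] → [0,∞) be nondecreasing, piecewise continuously differentiable functions with B̂ convex, B̂(0) = B(0) and B̂(T) = B(T). Suppose that B̂ is affine on every open interval on which B(t) > B̂(t). Then ∫₀ᵀ φ(B̂'(t)) dt ≤ ∫₀ᵀ φ(B'(t)) dt; that is, among all transmitted data curves delivering the same total amount of data by time T, B̂ consumes no more energy than B. -/
open MeasureTheory Set Filter intervalIntegral

noncomputable section

/-! Convexity of `φ` gives pointwise `φ (B') ≥ φ (B̂') + k * (B' - B̂')`, where `k = φ'₊ (B̂')` is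
the right derivative of `φ` at `B̂'`, so it suffices that `∫ k * g' ≥ 0` for `g = B - B̂`, which
vanishes at `0` and `T`. As `B̂` is convex, `k` is nondecreasing in time, and it is locally
constant where `g > 0` because `B̂` is affine there. Writing `k - c = ∫_c^C 1{l < k} dl` and
swapping the integrals, `∫ (k - c) * g'` becomes an integral over `l` of `∫_{k > l} g' = -g τ_l`,
with `τ_l` the left end of the superlevel set `{k > l}`; since `k` is not locally constant at
`τ_l`, `g τ_l ≤ 0`. -/

open Topology

/-- Unlike `derivWithin f (Ioi x) x`, this is the right derivative of a function convex on
`Ici 0` also at the endpoint `0`. -/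
def rightSlope (f : ℝ → ℝ) (x : ℝ) : ℝ :=
  sInf (slope f x '' Ioi x)

section rightSlope

variable {f : ℝ → ℝ} {x y : ℝ}

theorem rightSlope_le_slope (hf : MonotoneOn f (Ici 0)) (hx : 0 ≤ x) (hxy : x < y) :
    rightSlope f x ≤ slope f x y := by
  refine csInf_le ⟨0, ?_⟩ ⟨y, hxy, rfl⟩
  rintro _ ⟨z, hxz : x < z, rfl⟩
  exact hf.slope_nonneg hx (hx.trans hxz.le)

theorem slope_le_rightSlope (hf : ConvexOn ℝ (Ici 0) f) (hx : 0 ≤ x) (hxy : x < y) :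
    slope f x y ≤ rightSlope f y := by
  refine le_csInf ⟨_, y + 1, lt_add_one y, rfl⟩ ?_
  rintro _ ⟨z, hyz : y < z, rfl⟩
  simpa only [slope_def_field] using
    hf.slope_mono_adjacent hx (hx.trans (hxy.trans hyz).le) hxy hyz

theorem monotoneOn_rightSlope (hf : ConvexOn ℝ (Ici 0) f) (hf' : MonotoneOn f (Ici 0)) :
    MonotoneOn (rightSlope f) (Ici 0) := by
  intro x hx y _ hxy
  rcases hxy.eq_or_lt with rfl | hxy
  · rfl
  · exact (rightSlope_le_slope hf' hx hxy).trans (slope_le_rightSlope hf hx hxy)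

theorem add_rightSlope_mul_sub_le (hf : ConvexOn ℝ (Ici 0) f) (hf' : MonotoneOn f (Ici 0))
    (hx : 0 ≤ x) (hy : 0 ≤ y) : f x + rightSlope f x * (y - x) ≤ f y := by
  rcases lt_trichotomy y x with hyx | rfl | hxy
  · have := slope_le_rightSlope hf hy hyx
    rw [slope_def_field, div_le_iff₀ (sub_pos.2 hyx)] at this
    nlinarith
  · simp
  · have := rightSlope_le_slope hf' hx hxy
    rw [slope_def_field, le_div_iff₀ (sub_pos.2 hxy)] at this
    linarith

theorem rightSlope_mem_Icc (hf : ConvexOn ℝ (Ici 0) f) (hf' : MonotoneOn f (Ici 0))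
    (hx : 0 ≤ x) (hxy : x ≤ y) : rightSlope f x ∈ Icc (rightSlope f 0) (rightSlope f y) :=
  ⟨monotoneOn_rightSlope hf hf' self_mem_Ici hx hx,
    monotoneOn_rightSlope hf hf' hx (hx.trans hxy) hxy⟩

end rightSlope

section IooDiff

variable {a b : ℝ} {s : Set ℝ}

theorem restrict_Ioc_eq_restrict_Ioo_diff (hs : s.Countable) :
    volume.restrict (Ioc a b) = volume.restrict (Ioo a b \ s) :=
  Measure.restrict_congr_set <| Ioo_ae_eq_Ioc.symm.trans
    (sdiff_null_ae_eq_self (hs.measure_zero volume)).symm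

theorem ae_restrict_Ioc_mem_Ioo_diff (hs : s.Countable) :
    ∀ᵐ t ∂volume.restrict (Ioc a b), t ∈ Ioo a b \ s := by
  rw [restrict_Ioc_eq_restrict_Ioo_diff hs]
  exact ae_restrict_mem (measurableSet_Ioo.diff hs.measurableSet)

theorem ContinuousOn.aestronglyMeasurable_restrict_Ioc {f : ℝ → ℝ} (hs : s.Countable)
    (hf : ContinuousOn f (Ioo a b \ s)) : AEStronglyMeasurable f (volume.restrict (Ioc a b)) := by
  rw [restrict_Ioc_eq_restrict_Ioo_diff hs]
  exact hf.aestronglyMeasurable (measurableSet_Ioo.diff hs.measurableSet)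

theorem MonotoneOn.aestronglyMeasurable_restrict_Ioc {f : ℝ → ℝ} (hs : s.Countable)
    (hf : MonotoneOn f (Ioo a b \ s)) : AEStronglyMeasurable f (volume.restrict (Ioc a b)) := by
  rw [restrict_Ioc_eq_restrict_Ioo_diff hs]
  exact (aemeasurable_restrict_of_monotoneOn (measurableSet_Ioo.diff hs.measurableSet) hf)
    |>.aestronglyMeasurable

end IooDiff

theorem HasDerivAt.nonneg_of_monotoneOn_Icc {f : ℝ → ℝ} {a b t d : ℝ}
    (hd : HasDerivAt f d t) (hf : MonotoneOn f (Icc a b)) (ht : t ∈ Ioo a b) : 0 ≤ d :=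
  hd.hasDerivWithinAt.nonneg_of_monotoneOn
    (by simpa using
      (PerfectSpace.univ_preperfect t (mem_univ t)).nhds_inter (Ioo_mem_nhds ht.1 ht.2))
    (hf.mono Ioo_subset_Icc_self)

namespace PiecewiseC1On

variable {a b : ℝ} {f f' : ℝ → ℝ}

theorem integrableOn_deriv (h : PiecewiseC1On a b f f') : IntegrableOn f' (Ioc a b) := by
  obtain ⟨-, ⟨s, -, hf'⟩, M, hM⟩ := h
  refine .of_bound measure_Ioc_lt_top
    ((hf'.mono (sdiff_subset_sdiff_left Ioo_subset_Icc_self)).aestronglyMeasurable_restrict_Ioc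
      s.countable_toSet) M ?_
  filter_upwards [ae_restrict_mem measurableSet_Ioc] with t ht
  exact hM t (Ioc_subset_Icc_self ht)

theorem integrableOn_comp_deriv (h : PiecewiseC1On a b f f') (hf : MonotoneOn f (Icc a b))
    {ψ : ℝ → ℝ} (hψ : ContinuousOn ψ (Ici 0)) (hψ' : MonotoneOn ψ (Ici 0)) :
    IntegrableOn (fun t => ψ (f' t)) (Ioc a b) := by
  obtain ⟨-, ⟨s, hd, hf'⟩, M, hM⟩ := h
  have hpos : ∀ t ∈ Ioo a b \ s, 0 ≤ f' t := fun t ht =>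
    (hd t ht.1 ht.2).nonneg_of_monotoneOn_Icc hf ht.1
  have hmeas := (hψ.comp (hf'.mono (sdiff_subset_sdiff_left Ioo_subset_Icc_self)) hpos)
    |>.aestronglyMeasurable_restrict_Ioc s.countable_toSet
  refine .of_bound measure_Ioc_lt_top hmeas (max |ψ 0| |ψ M|) ?_
  filter_upwards [ae_restrict_Ioc_mem_Ioo_diff s.countable_toSet] with t ht
  have hM' : f' t ≤ M := (abs_le.1 (hM t (Ioo_subset_Icc_self ht.1))).2
  have h0 : ψ 0 ≤ ψ (f' t) := hψ' self_mem_Ici (hpos t ht) (hpos t ht)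
  have h1 : ψ (f' t) ≤ ψ M := hψ' (hpos t ht) ((hpos t ht).trans hM') hM'
  exact abs_le_max_abs_abs h0 h1

end PiecewiseC1On

section LayerCake

variable {α : Type*} [MeasurableSpace α] {μ : Measure α} [SFinite μ] {k f : α → ℝ} {c C : ℝ}

theorem integral_sub_mul_eq_integral_integral_indicator_of_measurable (hk : Measurable k)
    (hf : Integrable f μ) (hkc : ∀ᵐ x ∂μ, k x ∈ Icc c C) :
    ∫ x, (k x - c) * f x ∂μ = ∫ l in Ioc c C, ∫ x, {x | l < k x}.indicator f x ∂μ := by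
  have hF : Integrable (Function.uncurry fun x l => {x | l < k x}.indicator f x)
      (μ.prod (volume.restrict (Ioc c C))) :=
    (hf.comp_fst _).indicator (measurableSet_lt measurable_snd (hk.comp measurable_fst))
  rw [← integral_integral_swap hF]
  refine integral_congr_ae (hkc.mono fun x hx => ?_)
  have hind : ∀ l, {x | l < k x}.indicator f x = (Iio (k x)).indicator (fun _ => f x) l :=
    fun l => by simp only [indicator_apply, mem_ofPred_eq, mem_Iio]
  have hIoo : Ioc c C ∩ Iio (k x) = Ioo c (k x) := by
    ext l
    simp only [mem_inter_iff, mem_Ioc, mem_Iio, mem_Ioo]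
    exact ⟨fun h => ⟨h.1.1, h.2⟩, fun h => ⟨⟨h.1, h.2.le.trans hx.2⟩, h.2⟩⟩
  simp only [hind]
  rw [setIntegral_indicator measurableSet_Iio, hIoo, setIntegral_const,
    Real.volume_real_Ioo_of_le hx.1, smul_eq_mul]

theorem integral_sub_mul_eq_integral_integral_indicator (hk : AEMeasurable k μ)
    (hf : Integrable f μ) (hkc : ∀ᵐ x ∂μ, k x ∈ Icc c C) :
    ∫ x, (k x - c) * f x ∂μ = ∫ l in Ioc c C, ∫ x, {x | l < k x}.indicator f x ∂μ := by
  have hkk := hk.ae_eq_mk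
  calc ∫ x, (k x - c) * f x ∂μ = ∫ x, (hk.mk k x - c) * f x ∂μ :=
        integral_congr_ae (hkk.mono fun x hx => by simp only [hx])
    _ = ∫ l in Ioc c C, ∫ x, {x | l < hk.mk k x}.indicator f x ∂μ :=
        integral_sub_mul_eq_integral_integral_indicator_of_measurable hk.measurable_mk hf
          ((hkc.and hkk).mono fun x hx => hx.2 ▸ hx.1)
    _ = ∫ l in Ioc c C, ∫ x, {x | l < k x}.indicator f x ∂μ :=
        integral_congr_ae (.of_forall fun l => integral_congr_ae (hkk.mono fun x hx => by
          simp only [indicator_apply, mem_ofPred_eq, hx]))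

end LayerCake

theorem ConvexOn.monotoneOn_of_hasDerivAt {S D : Set ℝ} {f f' : ℝ → ℝ} (hf : ConvexOn ℝ S f)
    (hDS : D ⊆ S) (hd : ∀ t ∈ D, HasDerivAt f (f' t) t) : MonotoneOn f' D := by
  intro x hx y hy hxy
  rcases hxy.eq_or_lt with rfl | hxy
  · rfl
  · exact (hf.le_slope_of_hasDerivAt (hDS hx) (hDS hy) hxy (hd x hx)).trans
      (hf.slope_le_of_hasDerivAt (hDS hx) (hDS hy) hxy (hd y hy))

theorem HasDerivAt.eq_of_eqOn_Ioo_affine {f : ℝ → ℝ} {u v m c t d : ℝ}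
    (hd : HasDerivAt f d t) (hf : ∀ x ∈ Ioo u v, f x = m * x + c) (ht : t ∈ Ioo u v) : d = m := by
  have hlin : HasDerivAt (fun x => m * x + c) m t := by
    simpa using ((hasDerivAt_id t).const_mul m).add_const c
  exact hd.unique (hlin.congr_of_eventuallyEq (eventually_of_mem (Ioo_mem_nhds ht.1 ht.2) hf))

theorem exists_eventually_hasDerivAt_eq_of_lt {f F : ℝ → ℝ} {a b τ : ℝ}
    (hf : ContinuousOn f (Icc a b)) (hF : ContinuousOn F (Icc a b))
    (haff : ∀ u v : ℝ, a ≤ u → u < v → v ≤ b → (∀ t ∈ Ioo u v, f t < F t) →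
      ∃ mc : ℝ × ℝ, ∀ t ∈ Ioo u v, f t = mc.1 * t + mc.2)
    (hτ : τ ∈ Ioo a b) (hlt : f τ < F τ) :
    ∃ m, ∀ᶠ t in 𝓝 τ, ∀ d, HasDerivAt f d t → d = m := by
  have hnhds : Icc a b ∈ 𝓝 τ := Icc_mem_nhds hτ.1 hτ.2
  have hev : ∀ᶠ t in 𝓝 τ, f t < F t ∧ t ∈ Ioo a b :=
    ((hf.continuousAt hnhds).eventually_lt (hF.continuousAt hnhds) hlt).and
      (Ioo_mem_nhds hτ.1 hτ.2)
  obtain ⟨u, v, huv, hsub⟩ := mem_nhds_iff_exists_Ioo_subset.1 hev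
  have hab : a ≤ u ∧ v ≤ b :=
    (Ioo_subset_Ioo_iff (huv.1.trans huv.2)).1 fun t ht => (hsub ht).2
  obtain ⟨mc, hmc⟩ := haff u v hab.1 (huv.1.trans huv.2) hab.2 fun t ht => (hsub ht).1
  exact ⟨mc.1, eventually_of_mem (Ioo_mem_nhds huv.1 huv.2) fun t ht d hd =>
    hd.eq_of_eqOn_Ioo_affine hmc ht⟩

section MonotoneWeight

variable {a b c C : ℝ} {g g' k : ℝ → ℝ} {s : Set ℝ}

theorem MeasureTheory.IntegrableOn.mul_of_monotoneOn (hg' : IntegrableOn g' (Ioc a b))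
    (hs : s.Countable) (hk : MonotoneOn k (Ioo a b \ s)) (hkc : ∀ t ∈ Ioo a b \ s, k t ∈ Icc c C) :
    IntegrableOn (fun t => k t * g' t) (Ioc a b) := by
  refine hg'.bdd_mul (hk.aestronglyMeasurable_restrict_Ioc hs) (c := max |c| |C|) ?_
  filter_upwards [ae_restrict_Ioc_mem_Ioo_diff hs] with t ht
  exact abs_le_max_abs_abs (hkc t ht).1 (hkc t ht).2

theorem apply_sInf_superlevel_nonpos (hs : s.Countable) (ha : g a = 0) (hb : g b = 0)
    (hloc : ∀ τ ∈ Ioo a b, 0 < g τ → ∃ m, ∀ᶠ t in 𝓝 τ, t ∈ Ioo a b \ s → k t = m)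
    {l : ℝ} (hS : {t ∈ Ioo a b \ s | l < k t}.Nonempty) :
    g (sInf {t ∈ Ioo a b \ s | l < k t}) ≤ 0 := by
  set S := {t ∈ Ioo a b \ s | l < k t}
  set τ := sInf S
  have hbdd : BddBelow S := ⟨a, fun t ht => ht.1.1.1.le⟩
  obtain ⟨t₀, ht₀⟩ := hS
  by_contra! hgτ
  have hτ : τ ∈ Ioo a b :=
    ⟨(le_csInf ⟨t₀, ht₀⟩ fun t ht => ht.1.1.1.le).lt_of_ne (ne_of_apply_ne g (ha ▸ hgτ.ne)),
      ((csInf_le hbdd ht₀).trans ht₀.1.1.2.le).lt_of_ne (ne_of_apply_ne g (hb ▸ hgτ.ne'))⟩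
  obtain ⟨m, hm⟩ := hloc τ hτ hgτ
  obtain ⟨u, v, ⟨huτ, hτv⟩, huv⟩ :=
    mem_nhds_iff_exists_Ioo_subset.1 (hm.and (Ioo_mem_nhds hτ.1 hτ.2))
  -- `k = m` near `τ`: a point of `S` just right of `τ` gives `l < m`, so a point off `s` just
  -- left of `τ` lies in `S`
  obtain ⟨t₂, ht₂S, ht₂v⟩ := exists_lt_of_csInf_lt ⟨t₀, ht₀⟩ hτv
  have ht₂ : k t₂ = m := (huv ⟨huτ.trans_le (csInf_le hbdd ht₂S), ht₂v⟩).1 ht₂S.1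
  obtain ⟨t₁, ht₁s, hut₁, ht₁τ⟩ := (hs.dense_compl ℝ).exists_between huτ
  have ht₁ := huv ⟨hut₁, ht₁τ.trans hτv⟩
  have ht₁S : t₁ ∈ S := ⟨⟨ht₁.2, ht₁s⟩, by rw [ht₁.1 ⟨ht₁.2, ht₁s⟩, ← ht₂]; exact ht₂S.2⟩
  exact (csInf_le hbdd ht₁S).not_gt ht₁τ

theorem setIntegral_indicator_superlevel_nonneg (hs : s.Countable)
    (hg : ContinuousOn g (Icc a b)) (hg' : ∀ t ∈ Ioo a b \ s, HasDerivAt g (g' t) t)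
    (hg'i : IntegrableOn g' (Ioc a b)) (ha : g a = 0) (hb : g b = 0)
    (hk : MonotoneOn k (Ioo a b \ s))
    (hloc : ∀ τ ∈ Ioo a b, 0 < g τ → ∃ m, ∀ᶠ t in 𝓝 τ, t ∈ Ioo a b \ s → k t = m) (l : ℝ) :
    0 ≤ ∫ t in Ioc a b, {t | l < k t}.indicator g' t := by
  set S := {t ∈ Ioo a b \ s | l < k t}
  rcases S.eq_empty_or_nonempty with hS | hS
  · refine (integral_eq_zero_of_ae ?_).ge
    filter_upwards [ae_restrict_Ioc_mem_Ioo_diff hs] with t ht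
    exact indicator_of_notMem (show t ∉ {t | l < k t} from fun hlt => hS.subset ⟨ht, hlt⟩) g'
  set τ := sInf S
  have hbdd : BddBelow S := ⟨a, fun t ht => ht.1.1.1.le⟩
  obtain ⟨t₀, ht₀⟩ := hS
  have haτ : a ≤ τ := le_csInf ⟨t₀, ht₀⟩ fun t ht => ht.1.1.1.le
  have hτb : τ ≤ b := (csInf_le hbdd ht₀).trans ht₀.1.1.2.le
  have hae : {t | l < k t}.indicator g' =ᵐ[volume.restrict (Ioc a b)] (Ioc τ b).indicator g' := by
    filter_upwards [ae_restrict_Ioc_mem_Ioo_diff (hs.insert τ)] with t ⟨htab, hts⟩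
    have htD : t ∈ Ioo a b \ s := ⟨htab, fun h => hts (Or.inr h)⟩
    rcases lt_or_gt_of_ne fun h => hts (Or.inl h) with htτ | hτt
    · rw [indicator_of_notMem (show t ∉ {t | l < k t} from fun hlt =>
          (csInf_le hbdd ⟨htD, hlt⟩).not_gt htτ),
        indicator_of_notMem fun h => h.1.not_gt htτ]
    · obtain ⟨t', ht'S, ht't⟩ := exists_lt_of_csInf_lt ⟨t₀, ht₀⟩ hτt
      rw [indicator_of_mem (show t ∈ {t | l < k t} from ht'S.2.trans_le (hk ht'S.1 htD ht't.le)),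
        indicator_of_mem (show t ∈ Ioc τ b from ⟨hτt, htab.2.le⟩)]
  have hftc : ∫ t in τ..b, g' t = g b - g τ :=
    integral_eq_of_hasDerivAt_off_countable_of_le g g' hτb hs (hg.mono (Icc_subset_Icc_left haτ))
      (fun t ht => hg' t ⟨⟨haτ.trans_lt ht.1.1, ht.1.2⟩, ht.2⟩)
      ((intervalIntegrable_iff_integrableOn_Ioc_of_le hτb).2
        (hg'i.mono_set (Ioc_subset_Ioc_left haτ)))
  rw [integral_congr_ae hae, setIntegral_indicator measurableSet_Ioc,
    inter_eq_right.2 (Ioc_subset_Ioc_left haτ), ← intervalIntegral.integral_of_le hτb, hftc, hb]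
  linarith [apply_sInf_superlevel_nonpos hs ha hb hloc ⟨t₀, ht₀⟩]

theorem setIntegral_mul_deriv_nonneg_of_monotoneOn (hab : a ≤ b) (hs : s.Countable)
    (hg : ContinuousOn g (Icc a b)) (hg' : ∀ t ∈ Ioo a b \ s, HasDerivAt g (g' t) t)
    (hg'i : IntegrableOn g' (Ioc a b)) (ha : g a = 0) (hb : g b = 0)
    (hk : MonotoneOn k (Ioo a b \ s)) (hkc : ∀ t ∈ Ioo a b \ s, k t ∈ Icc c C)
    (hloc : ∀ τ ∈ Ioo a b, 0 < g τ → ∃ m, ∀ᶠ t in 𝓝 τ, t ∈ Ioo a b \ s → k t = m) :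
    0 ≤ ∫ t in Ioc a b, k t * g' t := by
  have hftc : ∫ t in Ioc a b, g' t = 0 := by
    rw [← intervalIntegral.integral_of_le hab, integral_eq_of_hasDerivAt_off_countable_of_le g g'
      hab hs hg hg' ((intervalIntegrable_iff_integrableOn_Ioc_of_le hab).2 hg'i), ha, hb, sub_zero]
  have hshift : ∫ t in Ioc a b, k t * g' t = ∫ t in Ioc a b, (k t - c) * g' t := by
    simp_rw [sub_mul]
    rw [integral_sub (hg'i.mul_of_monotoneOn hs hk hkc) (hg'i.const_mul c),
      MeasureTheory.integral_const_mul, hftc, mul_zero, sub_zero]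
  rw [hshift, integral_sub_mul_eq_integral_integral_indicator
    (hk.aestronglyMeasurable_restrict_Ioc hs).aemeasurable hg'i
    ((ae_restrict_Ioc_mem_Ioo_diff hs).mono hkc)]
  exact setIntegral_nonneg measurableSet_Ioc fun l _ =>
    setIntegral_indicator_superlevel_nonneg hs hg hg' hg'i ha hb hk hloc l

end MonotoneWeight

theorem setIntegral_add_rightSlope_mul_sub_le {φ u v : ℝ → ℝ} {a b : ℝ} {s : Set ℝ}
    (hs : s.Countable) (hφ : ConvexOn ℝ (Ici 0) φ) (hφ' : MonotoneOn φ (Ici 0))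
    (hu : IntegrableOn (fun t => φ (u t)) (Ioc a b))
    (hv : IntegrableOn (fun t => φ (v t)) (Ioc a b))
    (huv : IntegrableOn (fun t => rightSlope φ (u t) * (v t - u t)) (Ioc a b))
    (hu₀ : ∀ t ∈ Ioo a b \ s, 0 ≤ u t) (hv₀ : ∀ t ∈ Ioo a b \ s, 0 ≤ v t) :
    (∫ t in Ioc a b, φ (u t)) + ∫ t in Ioc a b, rightSlope φ (u t) * (v t - u t) ≤
      ∫ t in Ioc a b, φ (v t) := by
  rw [← integral_add hu huv]
  refine integral_mono_ae (hu.add huv) hv ?_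
  filter_upwards [ae_restrict_Ioc_mem_Ioo_diff hs] with t ht
  exact add_rightSlope_mul_sub_le hφ hφ' (hu₀ t ht) (hv₀ t ht)

theorem truncated_tangent_energy_minimal_general
    (φ : ℝ → ℝ)
    (hφ_convex : ConvexOn ℝ (Set.Ici 0) φ)
    (hφ_mono : StrictMonoOn φ (Set.Ici 0))
    (hφ_cont : ContinuousOn φ (Set.Ici 0))
    (T : ℝ) (hT : 0 < T)
    (Bhat Bhat' B B' : ℝ → ℝ)
    (hBhat_pc1 : PiecewiseC1On 0 T Bhat Bhat')
    (hB_pc1 : PiecewiseC1On 0 T B B')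
    (hBhat_mono : MonotoneOn Bhat (Set.Icc 0 T))
    (hB_mono : MonotoneOn B (Set.Icc 0 T))
    (hBhat_convex : ConvexOn ℝ (Set.Icc 0 T) Bhat)
    (h_start : Bhat 0 = B 0) (h_end : Bhat T = B T)
    -- `B̂` is affine on every open interval on which `B > B̂`
    (h_affine : ∀ a b : ℝ, 0 ≤ a → a < b → b ≤ T →
      (∀ t ∈ Set.Ioo a b, Bhat t < B t) →
      ∃ mc : ℝ × ℝ, ∀ t ∈ Set.Ioo a b, Bhat t = mc.1 * t + mc.2) :
    (∫ t in (0:ℝ)..T, φ (Bhat' t)) ≤ ∫ t in (0:ℝ)..T, φ (B' t) := by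
  have hφ_mono' := hφ_mono.monotoneOn
  obtain ⟨hBhat_cont, ⟨s₁, hBhat_deriv, -⟩, M, hM⟩ := id hBhat_pc1
  obtain ⟨hB_cont, ⟨s₂, hB_deriv, -⟩, -⟩ := id hB_pc1
  set D := Ioo 0 T \ (↑s₁ ∪ ↑s₂ : Set ℝ)
  have hs : (↑s₁ ∪ ↑s₂ : Set ℝ).Countable := s₁.countable_toSet.union s₂.countable_toSet
  have hBhat' : ∀ t ∈ D, HasDerivAt Bhat (Bhat' t) t := fun t ht =>
    hBhat_deriv t ht.1 fun h => ht.2 (Or.inl h)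
  have hB' : ∀ t ∈ D, HasDerivAt B (B' t) t := fun t ht =>
    hB_deriv t ht.1 fun h => ht.2 (Or.inr h)
  have hBhat'_nonneg : ∀ t ∈ D, 0 ≤ Bhat' t := fun t ht =>
    (hBhat' t ht).nonneg_of_monotoneOn_Icc hBhat_mono ht.1
  have hB'_nonneg : ∀ t ∈ D, 0 ≤ B' t := fun t ht =>
    (hB' t ht).nonneg_of_monotoneOn_Icc hB_mono ht.1
  set k := fun t => rightSlope φ (Bhat' t)
  have hk : MonotoneOn k D := (monotoneOn_rightSlope hφ_convex hφ_mono').comp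
    (hBhat_convex.monotoneOn_of_hasDerivAt (fun t ht => Ioo_subset_Icc_self ht.1) hBhat')
    hBhat'_nonneg
  have hkc : ∀ t ∈ D, k t ∈ Icc (rightSlope φ 0) (rightSlope φ M) := fun t ht =>
    rightSlope_mem_Icc hφ_convex hφ_mono' (hBhat'_nonneg t ht)
      ((le_abs_self _).trans (hM t (Ioo_subset_Icc_self ht.1)))
  have hloc : ∀ τ ∈ Ioo 0 T, 0 < B τ - Bhat τ → ∃ m, ∀ᶠ t in 𝓝 τ, t ∈ D → k t = m := by
    intro τ hτ hpos
    obtain ⟨m, hm⟩ :=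
      exists_eventually_hasDerivAt_eq_of_lt hBhat_cont hB_cont h_affine hτ (sub_pos.1 hpos)
    exact ⟨rightSlope φ m, hm.mono fun t ht htD => by simp only [k, ht _ (hBhat' t htD)]⟩
  have hg'i : IntegrableOn (fun t => B' t - Bhat' t) (Ioc 0 T) :=
    hB_pc1.integrableOn_deriv.sub hBhat_pc1.integrableOn_deriv
  have hweight : 0 ≤ ∫ t in Ioc 0 T, k t * (B' t - Bhat' t) :=
    setIntegral_mul_deriv_nonneg_of_monotoneOn hT.le hs (hB_cont.sub hBhat_cont)
      (fun t ht => (hB' t ht).sub (hBhat' t ht)) hg'i (by simp [h_start]) (by simp [h_end])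
      hk hkc hloc
  rw [intervalIntegral.integral_of_le hT.le, intervalIntegral.integral_of_le hT.le]
  linarith [setIntegral_add_rightSlope_mul_sub_le hs hφ_convex hφ_mono'
    (hBhat_pc1.integrableOn_comp_deriv hBhat_mono hφ_cont hφ_mono')
    (hB_pc1.integrableOn_comp_deriv hB_mono hφ_cont hφ_mono')
    (hg'i.mul_of_monotoneOn hs hk hkc) hBhat'_nonneg hB'_nonneg]

/-- Step 3 in the proof of Theorem 3.2: a convex curve `B̂` that is affine on
every open interval where another curve `B` exceeds it, and shares its endpoints,
uses no more energy than `B`. -/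
theorem truncated_tangent_energy_minimal
    (r φ : ℝ → ℝ) (hr : IsRateFunction r) (hφ : IsInverseOn φ r)
    (hφ_convex : ConvexOn ℝ (Set.Ici 0) φ)
    (hφ_mono : StrictMonoOn φ (Set.Ici 0))
    (hφ_cont : ContinuousOn φ (Set.Ici 0))
    (T : ℝ) (hT : 0 < T)
    (Bhat Bhat' B B' : ℝ → ℝ)
    (hBhat_pc1 : PiecewiseC1On 0 T Bhat Bhat')
    (hB_pc1 : PiecewiseC1On 0 T B B')
    (hBhat_mono : MonotoneOn Bhat (Set.Icc 0 T))
    (hB_mono : MonotoneOn B (Set.Icc 0 T))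
    (hBhat_nonneg : ∀ t ∈ Set.Icc (0:ℝ) T, 0 ≤ Bhat t)
    (hB_nonneg : ∀ t ∈ Set.Icc (0:ℝ) T, 0 ≤ B t)
    (hBhat_convex : ConvexOn ℝ (Set.Icc 0 T) Bhat)
    (h_start : Bhat 0 = B 0) (h_end : Bhat T = B T)
    -- `B̂` is affine on every open interval on which `B > B̂`
    (h_affine : ∀ a b : ℝ, 0 ≤ a → a < b → b ≤ T →
      (∀ t ∈ Set.Ioo a b, Bhat t < B t) →
      ∃ mc : ℝ × ℝ, ∀ t ∈ Set.Ioo a b, Bhat t = mc.1 * t + mc.2) :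
    (∫ t in (0:ℝ)..T, φ (Bhat' t)) ≤ ∫ t in (0:ℝ)..T, φ (B' t) :=
  truncated_tangent_energy_minimal_general φ hφ_convex hφ_mono hφ_cont T hT Bhat Bhat' B B'
    hBhat_pc1 hB_pc1 hBhat_mono hB_mono hBhat_convex h_start h_end h_affine
end
end

section
/- Let E_s, E_r, B_s : [0,∞) → [0,∞) be nondecreasing and let r_sr, r_rd be rate functions. For T > 0 let D(T) denote the two-hop maximum throughput over the deadline [0,T]. Then for all 0 < t₀ < t, D(t) ≤ D(t₀) + (t − t₀) · r_rd( E_r(t) / (t − t₀) ). -/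
open MeasureTheory Set Filter intervalIntegral

noncomputable section

/-- The two-hop maximum throughput by deadline `T`. -/
def MaxThroughput (Es Er Bs rsr rrd : ℝ → ℝ) (T : ℝ) : ℝ :=
  sSup {x : ℝ | ∃ psr prd : ℝ → ℝ,
    TwoHopFeasible T Es Er Bs rsr rrd psr prd ∧
    x = ∫ t in (0:ℝ)..T, rrd (prd t)}

/-! A policy feasible for deadline `t` restricts to one feasible for `t₀`, so its throughput up
to `t₀` is at most `D(t₀)`. On `[t₀, t]` Jensen's inequality for the concave `r_rd` bounds the
relay's throughput by `(t - t₀) · r_rd(average power)`, and relay energy causality bounds the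
average power by `E_r(t) / (t - t₀)`. -/

theorem IsRateFunction.monotoneOn {r : ℝ → ℝ} (hr : IsRateFunction r) : MonotoneOn r (Ici 0) :=
  hr.2.1.monotoneOn

theorem IsRateFunction.nonneg_s5 {r : ℝ → ℝ} (hr : IsRateFunction r) {x : ℝ} (hx : 0 ≤ x) :
    0 ≤ r x :=
  hr.2.2.2.1 ▸ hr.monotoneOn (mem_Ici.mpr le_rfl) hx hx

theorem ConcaveOn.intervalIntegral_comp_le {s : Set ℝ} {r f : ℝ → ℝ} {a b : ℝ} (hab : a < b)
    (hr : ConcaveOn ℝ s r) (hr_cont : ContinuousOn r s) (hs : IsClosed s)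
    (hf : IntervalIntegrable f volume a b) (hrf : IntervalIntegrable (fun x => r (f x)) volume a b)
    (hfs : ∀ x ∈ Ioc a b, f x ∈ s) :
    ∫ x in a..b, r (f x) ≤ (b - a) * r ((∫ x in a..b, f x) / (b - a)) := by
  have hlen : 0 < b - a := sub_pos.mpr hab
  have : IsFiniteMeasure (volume.restrict (Ioc a b)) :=
    isFiniteMeasure_restrict.mpr measure_Ioc_lt_top.ne
  have : NeZero (volume.restrict (Ioc a b)) := ⟨by simpa [Measure.restrict_eq_zero] using hab⟩
  have average_eq_div (g : ℝ → ℝ) : ⨍ x in Ioc a b, g x = (∫ x in a..b, g x) / (b - a) := by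
    rw [setAverage_eq, Real.volume_real_Ioc_of_le hab.le, intervalIntegral.integral_of_le hab.le,
      smul_eq_mul, inv_mul_eq_div]
  have jensen := hr.le_map_average hr_cont hs (ae_restrict_of_forall_mem measurableSet_Ioc hfs)
    ((intervalIntegrable_iff_integrableOn_Ioc_of_le hab.le).mp hf)
    ((intervalIntegrable_iff_integrableOn_Ioc_of_le hab.le).mp hrf)
  rw [average_eq_div, average_eq_div, div_le_iff₀ hlen] at jensen
  linarith

theorem IntervalIntegrable.integral_add_adjacent_of_mem_uIcc {f : ℝ → ℝ} {a b c : ℝ}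
    (hf : IntervalIntegrable f volume a c) (hb : b ∈ uIcc a c) :
    (∫ x in a..b, f x) + ∫ x in b..c, f x = ∫ x in a..c, f x :=
  intervalIntegral.integral_add_adjacent_intervals (hf.mono_set (uIcc_subset_uIcc_left hb))
    (hf.mono_set (uIcc_subset_uIcc_right hb))

namespace TwoHopFeasible

variable {T : ℝ} {Es Er Bs rsr rrd psr prd : ℝ → ℝ}

theorem restrict (h : TwoHopFeasible T Es Er Bs rsr rrd psr prd) {T' : ℝ} (hT' : 0 ≤ T')
    (hT'T : T' ≤ T) : TwoHopFeasible T' Es Er Bs rsr rrd psr prd := by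
  obtain ⟨hpsr, hprd, hrsr, hrrd, hnonneg, hEs, hEr, hBs, hrelay⟩ := h
  have huIcc : uIcc 0 T' ⊆ uIcc 0 T := uIcc_subset_uIcc_left (mem_uIcc_of_le hT' hT'T)
  have hIcc : Icc 0 T' ⊆ Icc 0 T := Icc_subset_Icc_right hT'T
  exact ⟨hpsr.mono_set huIcc, hprd.mono_set huIcc, hrsr.mono_set huIcc, hrrd.mono_set huIcc,
    fun τ hτ => hnonneg τ (hIcc hτ), fun τ hτ => hEs τ (hIcc hτ), fun τ hτ => hEr τ (hIcc hτ),
    fun τ hτ => hBs τ (hIcc hτ), fun τ hτ => hrelay τ (hIcc hτ)⟩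

theorem throughput_le (h : TwoHopFeasible T Es Er Bs rsr rrd psr prd) (hT : 0 ≤ T) :
    ∫ s in (0:ℝ)..T, rrd (prd s) ≤ Bs T := by
  obtain ⟨-, -, -, -, -, -, -, hBs, hrelay⟩ := h
  exact (hrelay T ⟨hT, le_rfl⟩).trans (hBs T ⟨hT, le_rfl⟩)

theorem throughput_nonneg (h : TwoHopFeasible T Es Er Bs rsr rrd psr prd)
    (hrrd : IsRateFunction rrd) (hT : 0 ≤ T) : 0 ≤ ∫ s in (0:ℝ)..T, rrd (prd s) := by
  obtain ⟨-, -, -, -, hnonneg, -⟩ := h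
  exact intervalIntegral.integral_nonneg hT fun s hs => hrrd.nonneg_s5 (hnonneg s hs).2

theorem integral_prd_tail_le (h : TwoHopFeasible T Es Er Bs rsr rrd psr prd) {t₀ : ℝ}
    (ht₀ : 0 ≤ t₀) (ht₀T : t₀ ≤ T) : ∫ s in t₀..T, prd s ≤ Er T := by
  obtain ⟨-, hprd, -, -, hnonneg, -, hEr, -⟩ := h
  have hsplit := hprd.integral_add_adjacent_of_mem_uIcc (mem_uIcc_of_le ht₀ ht₀T)
  have hhead : 0 ≤ ∫ s in (0:ℝ)..t₀, prd s := intervalIntegral.integral_nonneg ht₀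
    fun s hs => (hnonneg s (Icc_subset_Icc_right ht₀T hs)).2
  linarith [hEr T ⟨ht₀.trans ht₀T, le_rfl⟩]

theorem throughput_tail_le (h : TwoHopFeasible T Es Er Bs rsr rrd psr prd)
    (hrrd : IsRateFunction rrd) {t₀ : ℝ} (ht₀ : 0 ≤ t₀) (ht₀T : t₀ < T) :
    ∫ s in t₀..T, rrd (prd s) ≤ (T - t₀) * rrd (Er T / (T - t₀)) := by
  have henergy := h.integral_prd_tail_le ht₀ ht₀T.le
  obtain ⟨-, hprd, -, hrrd_prd, hnonneg, -⟩ := h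
  have hsub : uIcc t₀ T ⊆ uIcc 0 T := uIcc_subset_uIcc_right (mem_uIcc_of_le ht₀ ht₀T.le)
  have hprd_nonneg : ∀ s ∈ Icc t₀ T, 0 ≤ prd s :=
    fun s hs => (hnonneg s ⟨ht₀.trans hs.1, hs.2⟩).2
  have hpower_nonneg : 0 ≤ (∫ s in t₀..T, prd s) / (T - t₀) :=
    div_nonneg (intervalIntegral.integral_nonneg ht₀T.le hprd_nonneg) (sub_pos.mpr ht₀T).le
  have hpower_le : (∫ s in t₀..T, prd s) / (T - t₀) ≤ Er T / (T - t₀) := by gcongr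
  calc ∫ s in t₀..T, rrd (prd s)
      ≤ (T - t₀) * rrd ((∫ s in t₀..T, prd s) / (T - t₀)) :=
        hrrd.2.2.1.intervalIntegral_comp_le ht₀T hrrd.1 isClosed_Ici
          (hprd.mono_set hsub) (hrrd_prd.mono_set hsub)
          fun s hs => hprd_nonneg s (Ioc_subset_Icc_self hs)
    _ ≤ (T - t₀) * rrd (Er T / (T - t₀)) := by
        gcongr
        exact hrrd.monotoneOn hpower_nonneg (hpower_nonneg.trans hpower_le) hpower_le

end TwoHopFeasible

theorem maxThroughput_nonneg {Es Er Bs rsr rrd : ℝ → ℝ} (hrrd : IsRateFunction rrd) {T : ℝ}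
    (hT : 0 ≤ T) : 0 ≤ MaxThroughput Es Er Bs rsr rrd T :=
  Real.sSup_nonneg fun _ ⟨_, _, h, hx⟩ => hx ▸ h.throughput_nonneg hrrd hT

theorem throughput_le_maxThroughput {T : ℝ} {Es Er Bs rsr rrd psr prd : ℝ → ℝ}
    (h : TwoHopFeasible T Es Er Bs rsr rrd psr prd) (hT : 0 ≤ T) :
    ∫ s in (0:ℝ)..T, rrd (prd s) ≤ MaxThroughput Es Er Bs rsr rrd T :=
  le_csSup ⟨Bs T, fun _ ⟨_, _, h', hx⟩ => hx ▸ h'.throughput_le hT⟩ ⟨psr, prd, h, rfl⟩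

theorem maxThroughput_increment_bound_general
    (Es Er Bs : ℝ → ℝ)
    (hEr_nonneg : ∀ t : ℝ, 0 ≤ t → 0 ≤ Er t)
    (rsr rrd : ℝ → ℝ) (hrrd : IsRateFunction rrd) :
    ∀ t₀ t : ℝ, 0 < t₀ → t₀ < t →
      MaxThroughput Es Er Bs rsr rrd t ≤
        MaxThroughput Es Er Bs rsr rrd t₀ + (t - t₀) * rrd (Er t / (t - t₀)) := by
  intro t₀ t ht₀ ht₀t
  have hlen : 0 < t - t₀ := sub_pos.mpr ht₀t
  have hbound_nonneg : 0 ≤ (t - t₀) * rrd (Er t / (t - t₀)) :=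
    mul_nonneg hlen.le (hrrd.nonneg_s5 (div_nonneg (hEr_nonneg t (ht₀.le.trans ht₀t.le)) hlen.le))
  -- the bound must be nonnegative, as the feasible set may be empty and `sSup ∅ = 0`
  refine Real.sSup_le ?_ (add_nonneg (maxThroughput_nonneg hrrd ht₀.le) hbound_nonneg)
  rintro _ ⟨psr, prd, h, rfl⟩
  rw [← h.2.2.2.1.integral_add_adjacent_of_mem_uIcc (mem_uIcc_of_le ht₀.le ht₀t.le)]
  exact add_le_add (throughput_le_maxThroughput (h.restrict ht₀.le ht₀t.le) ht₀.le)
    (h.throughput_tail_le hrrd ht₀.le ht₀t)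

/-- Key inequality in the proof of Lemma 3.3: the throughput gained between
deadlines `t₀ < t` is at most `(t - t₀) · r_rd(E_r(t) / (t - t₀))`. -/
theorem maxThroughput_increment_bound
    (Es Er Bs : ℝ → ℝ)
    (hEs_nonneg : ∀ t : ℝ, 0 ≤ t → 0 ≤ Es t) (hEs_mono : MonotoneOn Es (Set.Ici 0))
    (hEr_nonneg : ∀ t : ℝ, 0 ≤ t → 0 ≤ Er t) (hEr_mono : MonotoneOn Er (Set.Ici 0))
    (hBs_nonneg : ∀ t : ℝ, 0 ≤ t → 0 ≤ Bs t) (hBs_mono : MonotoneOn Bs (Set.Ici 0))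
    (rsr rrd : ℝ → ℝ) (hrsr : IsRateFunction rsr) (hrrd : IsRateFunction rrd) :
    ∀ t₀ t : ℝ, 0 < t₀ → t₀ < t →
      MaxThroughput Es Er Bs rsr rrd t ≤
        MaxThroughput Es Er Bs rsr rrd t₀ + (t - t₀) * rrd (Er t / (t - t₀)) :=
  maxThroughput_increment_bound_general Es Er Bs hEr_nonneg rsr rrd hrrd
end
end

section
/- Let E_s, E_r, B_s : [0,∞) → [0,∞) be nondecreasing with E_r bounded on every compact interval, and let r_sr, r_rd be rate functions with lim_{p→∞} r_rd(p)/p = 0. For T > 0 let D(T) denote the two-hop maximum throughput over the deadline [0,T]. Let B₀ > 0 and suppose C = {t > 0 : D(t) = B₀} is nonempty. Then T_min := inf C is attained (i.e., D(T_min) = B₀), and T_min = inf{ T > 0 : D(T) ≥ B₀ }. In particular, for every deadline T and every two-hop feasible pair (p_sr, p_rd) on [0,T] with ∫₀ᵀ r_rd(p_rd(t)) dt ≥ B₀, one has T ≥ T_min; thus the minimum completion time for delivering B₀ units of data equals T_min, the first time at which the maximum throughput function reaches B₀. -/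
/-!
The maximum throughput `D` vanishes at `0` and is monotone on `[0, ∞)`, because a feasible pair
extended by zero stays feasible. It is also upper semicontinuous from the right: since `r_rd` is
sublinear, for every `ε > 0` there is `c` with `r_rd p ≤ c + ε p`, so on `[T, T']` a feasible pair
delivers at most `(T' - T) c + ε E_r(T')` more than its restriction to `[0, T]`, whence
`D T' ≤ D T + (T' - T) c + ε E_r(T')`. A monotone function that is upper semicontinuous from the
right takes the value `B₀` at the infimum of the times where it equals `B₀`, and since `D 0 ≠ B₀`
this infimum is positive and is the first time at which `D` reaches `B₀`.
-/

open MeasureTheory Set Filter intervalIntegral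

noncomputable section

theorem MonotoneOn.exists_le_add_mul_of_tendsto_div {f : ℝ → ℝ} (hf : MonotoneOn f (Ici 0))
    (hlim : Tendsto (fun p => f p / p) atTop (nhds 0)) {ε : ℝ} (hε : 0 < ε) :
    ∃ c, ∀ q, 0 ≤ q → f q ≤ c + ε * q := by
  obtain ⟨K, hK⟩ := eventually_atTop.1
    ((hlim.eventually_lt_const hε).and (eventually_gt_atTop 0))
  have hK0 : 0 < K := (hK K le_rfl).2
  refine ⟨max (f K) 0, fun q hq => ?_⟩
  rcases le_total q K with hqK | hKq
  · have := hf hq hK0.le hqK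
    nlinarith [le_max_left (f K) 0]
  · obtain ⟨hlt, hq0⟩ := hK q hKq
    have := (div_lt_iff₀ hq0).1 hlt
    nlinarith [le_max_right (f K) 0]

theorem intervalIntegral.integral_comp_le_of_le_add_mul {f p : ℝ → ℝ} {a b c ε : ℝ}
    (hab : a ≤ b) (hp : IntervalIntegrable p volume a b)
    (hfp : IntervalIntegrable (fun s => f (p s)) volume a b)
    (hp_nonneg : ∀ s ∈ Icc a b, 0 ≤ p s) (hf : ∀ q, 0 ≤ q → f q ≤ c + ε * q) :
    ∫ s in a..b, f (p s) ≤ (b - a) * c + ε * ∫ s in a..b, p s := by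
  calc ∫ s in a..b, f (p s) ≤ ∫ s in a..b, (c + ε * p s) :=
        integral_mono_on hab hfp (intervalIntegrable_const.add (hp.const_mul ε))
          fun s hs => hf _ (hp_nonneg s hs)
    _ = (b - a) * c + ε * ∫ s in a..b, p s := by
        rw [integral_add intervalIntegrable_const (hp.const_mul ε), integral_const,
          integral_const_mul, smul_eq_mul]

theorem intervalIntegral.integral_indicator_Iic {g : ℝ → ℝ} {a T t : ℝ} (haT : a ≤ T) :
    ∫ s in a..t, (Iic T).indicator g s = ∫ s in a..min t T, g s := by
  rcases le_total t T with htT | hTt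
  · rw [min_eq_left htT]
    refine integral_congr fun s hs => indicator_of_mem ?_ g
    exact (hs.2.trans (max_le haT htT) : s ≤ T)
  · rw [min_eq_right hTt]
    exact integral_indicator ⟨haT, hTt⟩

theorem IntervalIntegrable.indicator_Iic {g : ℝ → ℝ} {a T t : ℝ}
    (hg : IntervalIntegrable g volume a T) (haT : a ≤ T) (hat : a ≤ t) :
    IntervalIntegrable ((Iic T).indicator g) volume a t := by
  rw [intervalIntegrable_iff_integrableOn_Ioc_of_le hat,
    integrableOn_indicator_iff measurableSet_Iic]
  exact ((intervalIntegrable_iff_integrableOn_Ioc_of_le haT).1 hg).mono_set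
    fun s hs => ⟨hs.2.1, hs.1⟩

section FirstHittingTime

variable {f : ℝ → ℝ} {B : ℝ}

theorem MonotoneOn.map_sInf_levelSet_eq (hmono : MonotoneOn f (Ici 0))
    (husc : ∀ T, 0 ≤ T → UpperSemicontinuousWithinAt f (Ici T) T)
    (hne : {t | 0 < t ∧ f t = B}.Nonempty) :
    f (sInf {t | 0 < t ∧ f t = B}) = B := by
  set C := {t | 0 < t ∧ f t = B}
  have hbdd : BddBelow C := ⟨0, fun t ht => ht.1.le⟩
  have hC_Ici : C ⊆ Ici (sInf C) := fun t ht => csInf_le hbdd ht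
  have hnonneg : 0 ≤ sInf C := le_csInf hne fun t ht => ht.1.le
  obtain ⟨t₀, ht₀⟩ := hne
  refine le_antisymm ((hmono hnonneg (hnonneg.trans (hC_Ici ht₀)) (hC_Ici ht₀)).trans ht₀.2.le)
    (not_lt.1 fun hlt => ?_)
  have := mem_closure_iff_nhdsWithin_neBot.1 (csInf_mem_closure ⟨t₀, ht₀⟩ hbdd)
  obtain ⟨t, hft, ht⟩ := ((((husc _ hnonneg).mono hC_Ici) B hlt).and self_mem_nhdsWithin).exists
  exact hft.ne ht.2

theorem MonotoneOn.isLeast_sInf_levelSet (hmono : MonotoneOn f (Ici 0))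
    (husc : ∀ T, 0 ≤ T → UpperSemicontinuousWithinAt f (Ici T) T) (hf₀ : f 0 ≠ B)
    (hne : {t | 0 < t ∧ f t = B}.Nonempty) :
    IsLeast {t | 0 < t ∧ B ≤ f t} (sInf {t | 0 < t ∧ f t = B}) := by
  have hattain := hmono.map_sInf_levelSet_eq husc hne
  have hnonneg : 0 ≤ sInf {t | 0 < t ∧ f t = B} := le_csInf hne fun t ht => ht.1.le
  refine ⟨⟨hnonneg.lt_of_ne fun h => hf₀ (h ▸ hattain), hattain.ge⟩, fun T ⟨hT, hBT⟩ => ?_⟩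
  refine not_lt.1 fun hlt => hlt.not_ge (csInf_le ⟨0, fun t ht => ht.1.le⟩ ⟨hT, ?_⟩)
  exact le_antisymm ((hmono hT.le hnonneg hlt.le).trans hattain.le) hBT

end FirstHittingTime

theorem IsRateFunction.map_zero {r : ℝ → ℝ} (hr : IsRateFunction r) : r 0 = 0 := hr.2.2.2.1

namespace TwoHopFeasible

variable {Es Er Bs rsr rrd psr prd : ℝ → ℝ} {T T' : ℝ}

theorem zero (hEs : ∀ t, 0 ≤ t → 0 ≤ Es t) (hEr : ∀ t, 0 ≤ t → 0 ≤ Er t)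
    (hBs : ∀ t, 0 ≤ t → 0 ≤ Bs t) (hrsr : rsr 0 = 0) (hrrd : rrd 0 = 0) (T : ℝ) :
    TwoHopFeasible T Es Er Bs rsr rrd 0 0 := by
  refine ⟨intervalIntegrable_const, intervalIntegrable_const, ?_, ?_, fun _ _ => ⟨le_rfl, le_rfl⟩,
    fun t ht => ?_, fun t ht => ?_, fun t ht => ?_, fun _ _ => ?_⟩
  all_goals simp only [Pi.zero_apply, hrsr, hrrd, intervalIntegral.integral_zero]
  exacts [intervalIntegrable_const, intervalIntegrable_const, hEs t ht.1, hEr t ht.1,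
    hBs t ht.1, le_rfl]

theorem of_le (h : TwoHopFeasible T Es Er Bs rsr rrd psr prd) (hT' : 0 ≤ T') (hle : T' ≤ T) :
    TwoHopFeasible T' Es Er Bs rsr rrd psr prd := by
  obtain ⟨i₁, i₂, i₃, i₄, c₁, c₂, c₃, c₄, c₅⟩ := h
  have hsub : uIcc 0 T' ⊆ uIcc 0 T := uIcc_subset_uIcc_left (mem_uIcc_of_le hT' hle)
  have hIcc : Icc 0 T' ⊆ Icc 0 T := Icc_subset_Icc_right hle
  exact ⟨i₁.mono_set hsub, i₂.mono_set hsub, i₃.mono_set hsub, i₄.mono_set hsub,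
    fun t ht => c₁ t (hIcc ht), fun t ht => c₂ t (hIcc ht), fun t ht => c₃ t (hIcc ht),
    fun t ht => c₄ t (hIcc ht), fun t ht => c₅ t (hIcc ht)⟩

theorem indicator_Iic (h : TwoHopFeasible T Es Er Bs rsr rrd psr prd) (hT : 0 ≤ T) (hT' : 0 ≤ T')
    (hEs : MonotoneOn Es (Ici 0)) (hEr : MonotoneOn Er (Ici 0)) (hBs : MonotoneOn Bs (Ici 0))
    (hrsr : rsr 0 = 0) (hrrd : rrd 0 = 0) :
    TwoHopFeasible T' Es Er Bs rsr rrd ((Iic T).indicator psr) ((Iic T).indicator prd) := by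
  obtain ⟨i₁, i₂, i₃, i₄, c₁, c₂, c₃, c₄, c₅⟩ := h
  have hsr : (fun s => rsr ((Iic T).indicator psr s)) = (Iic T).indicator (fun s => rsr (psr s)) :=
    (indicator_comp_of_zero hrsr).symm
  have hrd : (fun s => rrd ((Iic T).indicator prd s)) = (Iic T).indicator (fun s => rrd (prd s)) :=
    (indicator_comp_of_zero hrrd).symm
  have hmin : ∀ t ∈ Icc 0 T', min t T ∈ Icc 0 T ∧ min t T ≤ t := fun t ht =>
    ⟨⟨le_min ht.1 hT, min_le_right t T⟩, min_le_left t T⟩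
  refine ⟨i₁.indicator_Iic hT hT', i₂.indicator_Iic hT hT', hsr ▸ i₃.indicator_Iic hT hT',
    hrd ▸ i₄.indicator_Iic hT hT', fun t ht => ?_, fun t ht => ?_, fun t ht => ?_,
    fun t ht => ?_, fun t ht => ?_⟩
  · by_cases htT : t ≤ T
    · simpa [indicator_of_mem (show t ∈ Iic T from htT)] using c₁ t ⟨ht.1, htT⟩
    · simp [indicator_of_notMem (show t ∉ Iic T from htT)]
  all_goals
    obtain ⟨hm, hmt⟩ := hmin t ht
    simp only [hsr, hrd, intervalIntegral.integral_indicator_Iic hT]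
  · exact (c₂ _ hm).trans (hEs hm.1 ht.1 hmt)
  · exact (c₃ _ hm).trans (hEr hm.1 ht.1 hmt)
  · exact (c₄ _ hm).trans (hBs hm.1 ht.1 hmt)
  · exact c₅ _ hm

theorem integral_le_add (h : TwoHopFeasible T' Es Er Bs rsr rrd psr prd) (hT : 0 ≤ T)
    (hTT' : T ≤ T') {c ε : ℝ} (hε : 0 ≤ ε) (hrrd : ∀ q, 0 ≤ q → rrd q ≤ c + ε * q) :
    ∫ s in 0..T', rrd (prd s) ≤ (∫ s in 0..T, rrd (prd s)) + (T' - T) * c + ε * Er T' := by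
  obtain ⟨-, i₂, -, i₄, c₁, -, c₃, -, -⟩ := h
  have hsub₁ : uIcc 0 T ⊆ uIcc 0 T' := uIcc_subset_uIcc_left (mem_uIcc_of_le hT hTT')
  have hsub₂ : uIcc T T' ⊆ uIcc 0 T' := uIcc_subset_uIcc_right (mem_uIcc_of_le hT hTT')
  rw [← intervalIntegral.integral_add_adjacent_intervals (i₄.mono_set hsub₁) (i₄.mono_set hsub₂)]
  have htail := intervalIntegral.integral_comp_le_of_le_add_mul hTT' (i₂.mono_set hsub₂)
    (i₄.mono_set hsub₂) (fun s hs => (c₁ s ⟨hT.trans hs.1, hs.2⟩).2) hrrd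
  have hhead : 0 ≤ ∫ s in 0..T, prd s :=
    intervalIntegral.integral_nonneg hT fun s hs => (c₁ s ⟨hs.1, hs.2.trans hTT'⟩).2
  have hsplit : (∫ s in 0..T, prd s) + ∫ s in T..T', prd s = ∫ s in 0..T', prd s :=
    intervalIntegral.integral_add_adjacent_intervals (i₂.mono_set hsub₁) (i₂.mono_set hsub₂)
  have htail_le : ε * ∫ s in T..T', prd s ≤ ε * Er T' :=
    mul_le_mul_of_nonneg_left (by linarith [c₃ T' ⟨hT.trans hTT', le_rfl⟩]) hε
  linarith

end TwoHopFeasible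

section MaxThroughput

variable {Es Er Bs rsr rrd : ℝ → ℝ}

theorem integral_le_maxThroughput {T c ε : ℝ} {psr prd : ℝ → ℝ}
    (h : TwoHopFeasible T Es Er Bs rsr rrd psr prd) (hT : 0 ≤ T) (hε : 0 ≤ ε)
    (hrrd : ∀ q, 0 ≤ q → rrd q ≤ c + ε * q) :
    ∫ t in 0..T, rrd (prd t) ≤ MaxThroughput Es Er Bs rsr rrd T := by
  refine le_csSup ⟨T * c + ε * Er T, ?_⟩ ⟨psr, prd, h, rfl⟩
  rintro _ ⟨psr', prd', h', rfl⟩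
  simpa using h'.integral_le_add le_rfl hT hε hrrd

theorem maxThroughput_le {T b : ℝ} {psr₀ prd₀ : ℝ → ℝ}
    (h₀ : TwoHopFeasible T Es Er Bs rsr rrd psr₀ prd₀)
    (h : ∀ psr prd, TwoHopFeasible T Es Er Bs rsr rrd psr prd → ∫ t in 0..T, rrd (prd t) ≤ b) :
    MaxThroughput Es Er Bs rsr rrd T ≤ b := by
  refine csSup_le ⟨_, psr₀, prd₀, h₀, rfl⟩ ?_
  rintro _ ⟨psr, prd, hf, rfl⟩
  exact h psr prd hf

theorem maxThroughput_zero {psr₀ prd₀ : ℝ → ℝ} (h₀ : TwoHopFeasible 0 Es Er Bs rsr rrd psr₀ prd₀) :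
    MaxThroughput Es Er Bs rsr rrd 0 = 0 := by
  refine le_antisymm (maxThroughput_le h₀ fun _ _ _ => by simp) ?_
  have hbdd : BddAbove {x : ℝ | ∃ psr prd : ℝ → ℝ,
      TwoHopFeasible 0 Es Er Bs rsr rrd psr prd ∧ x = ∫ t in (0:ℝ)..0, rrd (prd t)} := by
    refine ⟨0, ?_⟩
    rintro _ ⟨_, _, _, rfl⟩
    simp
  calc (0 : ℝ) = ∫ t in (0:ℝ)..0, rrd (prd₀ t) := intervalIntegral.integral_same.symm
    _ ≤ _ := le_csSup hbdd ⟨psr₀, prd₀, h₀, rfl⟩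

theorem monotoneOn_maxThroughput (h₀ : ∀ T, TwoHopFeasible T Es Er Bs rsr rrd 0 0)
    (hEs : MonotoneOn Es (Ici 0)) (hEr : MonotoneOn Er (Ici 0)) (hBs : MonotoneOn Bs (Ici 0))
    (hrsr : rsr 0 = 0) (hrrd₀ : rrd 0 = 0) {c ε : ℝ} (hε : 0 ≤ ε)
    (hrrd : ∀ q, 0 ≤ q → rrd q ≤ c + ε * q) :
    MonotoneOn (MaxThroughput Es Er Bs rsr rrd) (Ici 0) := by
  intro T hT T' hT' hle
  refine maxThroughput_le (h₀ T) fun psr prd h => ?_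
  have hext := integral_le_maxThroughput
    (h.indicator_Iic hT hT' hEs hEr hBs hrsr hrrd₀) hT' hε hrrd
  have hcomp : (fun s => rrd ((Iic T).indicator prd s)) = (Iic T).indicator fun s => rrd (prd s) :=
    (indicator_comp_of_zero hrrd₀).symm
  rwa [hcomp, intervalIntegral.integral_indicator_Iic hT, min_eq_right hle] at hext

theorem maxThroughput_le_add {T T' c ε : ℝ} (h₀ : TwoHopFeasible T' Es Er Bs rsr rrd 0 0)
    (hT : 0 ≤ T) (hTT' : T ≤ T') (hε : 0 ≤ ε) (hrrd : ∀ q, 0 ≤ q → rrd q ≤ c + ε * q) :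
    MaxThroughput Es Er Bs rsr rrd T' ≤
      MaxThroughput Es Er Bs rsr rrd T + (T' - T) * c + ε * Er T' := by
  refine maxThroughput_le h₀ fun psr prd h => (h.integral_le_add hT hTT' hε hrrd).trans ?_
  gcongr
  exact integral_le_maxThroughput (h.of_le hT hTT') hT hε hrrd

theorem upperSemicontinuousWithinAt_maxThroughput_Ici
    (h₀ : ∀ T, TwoHopFeasible T Es Er Bs rsr rrd 0 0) (hEr : MonotoneOn Er (Ici 0))
    (hrrd : MonotoneOn rrd (Ici 0)) (hrrd_sublinear : Tendsto (fun p => rrd p / p) atTop (nhds 0))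
    {T : ℝ} (hT : 0 ≤ T) :
    UpperSemicontinuousWithinAt (MaxThroughput Es Er Bs rsr rrd) (Ici T) T := by
  set D := MaxThroughput Es Er Bs rsr rrd
  intro b hb
  obtain ⟨ε, hε, hεb⟩ := exists_pos_mul_lt (sub_pos.2 hb) (Er (T + 1))
  obtain ⟨c, hc⟩ := hrrd.exists_le_add_mul_of_tendsto_div hrrd_sublinear hε
  have hg : Continuous fun t => D T + (t - T) * c + ε * Er (T + 1) := by fun_prop
  have hlt : ∀ᶠ t in nhds T, D T + (t - T) * c + ε * Er (T + 1) < b :=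
    hg.continuousAt.eventually_lt continuousAt_const (by
      simp only [sub_self, zero_mul, add_zero]
      linarith)
  filter_upwards [self_mem_nhdsWithin, nhdsWithin_le_nhds hlt,
    nhdsWithin_le_nhds (eventually_le_nhds (lt_add_one T))] with t hTt hbt ht
  calc D t ≤ D T + (t - T) * c + ε * Er t := maxThroughput_le_add (h₀ t) hT hTt hε.le hc
    _ ≤ D T + (t - T) * c + ε * Er (T + 1) := by
      gcongr
      exact hEr (hT.trans hTt) (mem_Ici.2 (by linarith)) ht
    _ < b := hbt

end MaxThroughput

theorem completion_time_minimization_general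
    (Es Er Bs : ℝ → ℝ)
    (hEs_nonneg : ∀ t : ℝ, 0 ≤ t → 0 ≤ Es t) (hEs_mono : MonotoneOn Es (Set.Ici 0))
    (hEr_nonneg : ∀ t : ℝ, 0 ≤ t → 0 ≤ Er t) (hEr_mono : MonotoneOn Er (Set.Ici 0))
    (hBs_nonneg : ∀ t : ℝ, 0 ≤ t → 0 ≤ Bs t) (hBs_mono : MonotoneOn Bs (Set.Ici 0))
    (rsr rrd : ℝ → ℝ) (hrsr : IsRateFunction rsr) (hrrd : IsRateFunction rrd)
    (hrrd_sublinear : Filter.Tendsto (fun p => rrd p / p) Filter.atTop (nhds 0))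
    (B₀ : ℝ) (hB₀ : 0 < B₀)
    (C : Set ℝ)
    (hC_def : C = {t : ℝ | 0 < t ∧ MaxThroughput Es Er Bs rsr rrd t = B₀})
    (hC_nonempty : C.Nonempty) :
    MaxThroughput Es Er Bs rsr rrd (sInf C) = B₀ ∧
    sInf C = sInf {T : ℝ | 0 < T ∧ B₀ ≤ MaxThroughput Es Er Bs rsr rrd T} ∧
    (∀ T : ℝ, 0 < T → ∀ psr prd : ℝ → ℝ,
      TwoHopFeasible T Es Er Bs rsr rrd psr prd →
      B₀ ≤ (∫ t in (0:ℝ)..T, rrd (prd t)) → sInf C ≤ T) := by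
  subst hC_def
  have h₀ := TwoHopFeasible.zero hEs_nonneg hEr_nonneg hBs_nonneg hrsr.map_zero hrrd.map_zero
  obtain ⟨c, hc⟩ := hrrd.monotoneOn.exists_le_add_mul_of_tendsto_div hrrd_sublinear one_pos
  have hmono := monotoneOn_maxThroughput h₀ hEs_mono hEr_mono hBs_mono hrsr.map_zero
    hrrd.map_zero zero_le_one hc
  have husc := fun T (hT : 0 ≤ T) => upperSemicontinuousWithinAt_maxThroughput_Ici h₀ hEr_mono
    hrrd.monotoneOn hrrd_sublinear hT
  have hleast := hmono.isLeast_sInf_levelSet husc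
    ((maxThroughput_zero (h₀ 0)).trans_ne hB₀.ne) hC_nonempty
  refine ⟨hmono.map_sInf_levelSet_eq husc hC_nonempty, hleast.csInf_eq.symm,
    fun T hT psr prd h hB => hleast.2 ⟨hT, hB.trans ?_⟩⟩
  exact integral_le_maxThroughput h hT.le zero_le_one hc

/-- Theorem 3.4 (completion time minimization): if the level set
`C = {t > 0 : D(t) = B₀}` is nonempty, then `T_min = inf C` is attained,
equals the first time the maximum throughput reaches `B₀`, and no feasible pair
can deliver `B₀` units of data by an earlier deadline. -/
theorem completion_time_minimization
    (Es Er Bs : ℝ → ℝ)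
    (hEs_nonneg : ∀ t : ℝ, 0 ≤ t → 0 ≤ Es t) (hEs_mono : MonotoneOn Es (Set.Ici 0))
    (hEr_nonneg : ∀ t : ℝ, 0 ≤ t → 0 ≤ Er t) (hEr_mono : MonotoneOn Er (Set.Ici 0))
    (hEr_bdd : ∀ T : ℝ, 0 < T → ∃ M : ℝ, ∀ t ∈ Set.Icc (0:ℝ) T, Er t ≤ M)
    (hBs_nonneg : ∀ t : ℝ, 0 ≤ t → 0 ≤ Bs t) (hBs_mono : MonotoneOn Bs (Set.Ici 0))
    (rsr rrd : ℝ → ℝ) (hrsr : IsRateFunction rsr) (hrrd : IsRateFunction rrd)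
    (hrrd_sublinear : Filter.Tendsto (fun p => rrd p / p) Filter.atTop (nhds 0))
    (B₀ : ℝ) (hB₀ : 0 < B₀)
    (C : Set ℝ)
    (hC_def : C = {t : ℝ | 0 < t ∧ MaxThroughput Es Er Bs rsr rrd t = B₀})
    (hC_nonempty : C.Nonempty) :
    MaxThroughput Es Er Bs rsr rrd (sInf C) = B₀ ∧
    sInf C = sInf {T : ℝ | 0 < T ∧ B₀ ≤ MaxThroughput Es Er Bs rsr rrd T} ∧
    (∀ T : ℝ, 0 < T → ∀ psr prd : ℝ → ℝ,
      TwoHopFeasible T Es Er Bs rsr rrd psr prd →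
      B₀ ≤ (∫ t in (0:ℝ)..T, rrd (prd t)) → sInf C ≤ T) :=
  completion_time_minimization_general Es Er Bs hEs_nonneg hEs_mono hEr_nonneg hEr_mono hBs_nonneg
    hBs_mono rsr rrd hrsr hrrd hrrd_sublinear B₀ hB₀ C hC_def hC_nonempty
end
end
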